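/- arXiv:1506.07303 — 5 statements merged into one kernel-verified Lean document; each statement's English description precedes it below -/
import Mathlib

section
/- For every ordering ξ of the Pascal graph and every α ∈ (0,1), the set of infinite paths that coincide from some level onward with a path all of whose edges are ξ-minimal or with a path all of whose edges are ξ-maximal (in particular the set X'_ξ) has μ_α-measure zero. -/
/-- Vertex reached after `n` moves: (number of `false` moves, number of `true` moves). -/
def vertexAt (γ : ℕ → Bool) (n : ℕ) : ℕ × ℕ :=
  (((Finset.range n).filter fun i => γ i = false).card,
   ((Finset.range n).filter fun i => γ i = true).card)

def childOf (v : ℕ × ℕ) (m : Bool) : ℕ × ℕ :=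
  if m then (v.1, v.2 + 1) else (v.1 + 1, v.2)

def MoveMin (ξ : ℕ × ℕ → Bool) (v : ℕ × ℕ) (m : Bool) : Prop :=
  (childOf v m).1 = 0 ∨ (childOf v m).2 = 0 ∨ m = !ξ (childOf v m)

def MoveMax (ξ : ℕ × ℕ → Bool) (v : ℕ × ℕ) (m : Bool) : Prop :=
  (childOf v m).1 = 0 ∨ (childOf v m).2 = 0 ∨ m = ξ (childOf v m)

def IsMinEdge (ξ : ℕ × ℕ → Bool) (γ : ℕ → Bool) (i : ℕ) : Prop :=
  MoveMin ξ (vertexAt γ i) (γ i)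

def IsMaxEdge (ξ : ℕ × ℕ → Bool) (γ : ℕ → Bool) (i : ℕ) : Prop :=
  MoveMax ξ (vertexAt γ i) (γ i)

def XMin (ξ : ℕ × ℕ → Bool) : Set (ℕ → Bool) := {γ | ∀ i, IsMinEdge ξ γ i}

def XMax (ξ : ℕ × ℕ → Bool) : Set (ℕ → Bool) := {γ | ∀ i, IsMaxEdge ξ γ i}

def XPrime (ξ : ℕ × ℕ → Bool) : Set (ℕ → Bool) :=
  {γ | ∃ δ ∈ XMin ξ ∪ XMax ξ, ∃ N : ℕ, ∀ n, N ≤ n → γ n = δ n}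

/-- The all-ξ-minimal finite path (list of moves) from the root to a vertex. -/
def minPath (ξ : ℕ × ℕ → Bool) : ℕ × ℕ → List Bool
  | (0, 0) => []
  | (x + 1, 0) => minPath ξ (x, 0) ++ [false]
  | (0, y + 1) => minPath ξ (0, y) ++ [true]
  | (x + 1, y + 1) =>
      if ξ (x + 1, y + 1) then minPath ξ (x, y + 1) ++ [false]
      else minPath ξ (x + 1, y) ++ [true]
  termination_by p => p.1 + p.2

/-- The all-ξ-maximal finite path (list of moves) from the root to a vertex. -/
def maxPath (ξ : ℕ × ℕ → Bool) : ℕ × ℕ → List Bool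
  | (0, 0) => []
  | (x + 1, 0) => maxPath ξ (x, 0) ++ [false]
  | (0, y + 1) => maxPath ξ (0, y) ++ [true]
  | (x + 1, y + 1) =>
      if ξ (x + 1, y + 1) then maxPath ξ (x + 1, y) ++ [true]
      else maxPath ξ (x, y + 1) ++ [false]
  termination_by p => p.1 + p.2

open Classical in
/-- The adic (Vershik) transformation determined by ξ (identity where undefined). -/
noncomputable def adicT (ξ : ℕ × ℕ → Bool) (γ : ℕ → Bool) : ℕ → Bool :=
  if h : ∃ i, ¬ IsMaxEdge ξ γ i then
    let i0 := Nat.find h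
    let v := vertexAt γ (i0 + 1)
    let src : ℕ × ℕ := if ξ v then (v.1, v.2 - 1) else (v.1 - 1, v.2)
    fun n =>
      if n < i0 then (minPath ξ src).getD n false
      else if n = i0 then ξ v
      else γ n
  else γ

open Classical in
/-- The inverse adic transformation determined by ξ (identity where undefined). -/
noncomputable def adicTInv (ξ : ℕ × ℕ → Bool) (γ : ℕ → Bool) : ℕ → Bool :=
  if h : ∃ i, ¬ IsMinEdge ξ γ i then
    let i0 := Nat.find h
    let v := vertexAt γ (i0 + 1)
    let src : ℕ × ℕ := if ξ v then (v.1 - 1, v.2) else (v.1, v.2 - 1)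
    fun n =>
      if n < i0 then (maxPath ξ src).getD n false
      else if n = i0 then !ξ v
      else γ n
  else γ

/-- ℤ-iterates of the adic transformation. -/
noncomputable def adicIter (ξ : ℕ × ℕ → Bool) : ℤ → (ℕ → Bool) → (ℕ → Bool)
  | Int.ofNat n, γ => (adicT ξ)^[n] γ
  | Int.negSucc n, γ => (adicTInv ξ)^[n + 1] γ

/-- The k-coding of the orbit of γ: symbols are the initial segments of length k. -/
noncomputable def omegaCode (ξ : ℕ × ℕ → Bool) (k : ℕ) (γ : ℕ → Bool) : ℤ → List Bool :=
  fun t => (List.range k).map (adicIter ξ t γ)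

/-- Ordered list of all initial segments from the root to (x,y), in increasing ξ-order. -/
def segList (ξ : ℕ × ℕ → Bool) : ℕ × ℕ → List (List Bool)
  | (0, 0) => [[]]
  | (x + 1, 0) => (segList ξ (x, 0)).map (· ++ [false])
  | (0, y + 1) => (segList ξ (0, y)).map (· ++ [true])
  | (x + 1, y + 1) =>
      if ξ (x + 1, y + 1) then
        (segList ξ (x, y + 1)).map (· ++ [false]) ++ (segList ξ (x + 1, y)).map (· ++ [true])
      else
        (segList ξ (x + 1, y)).map (· ++ [true]) ++ (segList ξ (x, y + 1)).map (· ++ [false])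
  termination_by p => p.1 + p.2

/-- Level-k coded basic block at a vertex (x,y) with x+y ≥ k, a word over the
alphabet of initial segments of length k. -/
def codedBlock (ξ : ℕ × ℕ → Bool) (k : ℕ) : ℕ × ℕ → List (List Bool)
  | (0, 0) => segList ξ (0, 0)
  | (x + 1, 0) => if x + 1 ≤ k then segList ξ (x + 1, 0) else [List.replicate k false]
  | (0, y + 1) => if y + 1 ≤ k then segList ξ (0, y + 1) else [List.replicate k true]
  | (x + 1, y + 1) =>
      if x + 1 + (y + 1) ≤ k then segList ξ (x + 1, y + 1)
      else if ξ (x + 1, y + 1) then codedBlock ξ k (x, y + 1) ++ codedBlock ξ k (x + 1, y)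
      else codedBlock ξ k (x + 1, y) ++ codedBlock ξ k (x, y + 1)
  termination_by p => p.1 + p.2

/-- Basic block over the alphabet {a,b}, with a = `false` and b = `true`. -/
def basicBlock (ξ : ℕ × ℕ → Bool) : ℕ × ℕ → List Bool
  | (0, 0) => []
  | (_ + 1, 0) => [false]
  | (0, _ + 1) => [true]
  | (x + 1, y + 1) =>
      if ξ (x + 1, y + 1) then basicBlock ξ (x, y + 1) ++ basicBlock ξ (x + 1, y)
      else basicBlock ξ (x + 1, y) ++ basicBlock ξ (x, y + 1)
  termination_by p => p.1 + p.2

/-- The finite word ω_s ω_{s+1} ... ω_{t-1}. -/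
def wordAt (ω : ℤ → List Bool) (s t : ℤ) : List (List Bool) :=
  (List.range (t - s).toNat).map fun u => ω (s + u)

/-- A ξ-consistent factoring scheme for ω ∈ 𝒫_k^ℤ: `cuts j` is the set of starting
positions of the blocks of the level-(k+j) factorization, and `vert j s` is the
vertex whose coded basic block is the block starting at the cut `s`. -/
def IsConsistentScheme (ξ : ℕ × ℕ → Bool) (k : ℕ) (ω : ℤ → List Bool)
    (cuts : ℕ → Set ℤ) (vert : ℕ → ℤ → ℕ × ℕ) : Prop :=
  (∀ j : ℕ, ∀ M : ℤ, ∃ s ∈ cuts j, s < M) ∧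
  (∀ j : ℕ, ∀ M : ℤ, ∃ t ∈ cuts j, M < t) ∧
  (∀ j : ℕ, ∀ s ∈ cuts j, ∀ t ∈ cuts j, s < t → (∀ u ∈ cuts j, ¬(s < u ∧ u < t)) →
      (vert j s).1 + (vert j s).2 = k + j ∧
      wordAt ω s t = codedBlock ξ k (vert j s)) ∧
  (∀ j : ℕ, cuts (j + 1) ⊆ cuts j) ∧
  (∀ j : ℕ, ∀ s ∈ cuts (j + 1), ∀ t ∈ cuts (j + 1), s < t →
      (∀ u ∈ cuts (j + 1), ¬(s < u ∧ u < t)) →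
      ∀ x y : ℕ, vert (j + 1) s = (x + 1, y + 1) →
        ∃ m ∈ cuts j, s < m ∧ m < t ∧ (∀ u ∈ cuts j, s < u → u < t → u = m) ∧
          (if ξ (x + 1, y + 1)
            then vert j s = (x, y + 1) ∧ vert j m = (x + 1, y)
            else vert j s = (x + 1, y) ∧ vert j m = (x, y + 1)))

/-- The natural factoring scheme of the k-coding of γ: a level-(k+j) block begins at
coordinate t exactly when T^t γ begins with an all-ξ-minimal path to its level-(k+j) vertex. -/
noncomputable def natCuts (ξ : ℕ × ℕ → Bool) (k : ℕ) (γ : ℕ → Bool) : ℕ → Set ℤ :=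
  fun j => {t | ∀ i < k + j, IsMinEdge ξ (adicIter ξ t γ) i}

noncomputable def natVert (ξ : ℕ × ℕ → Bool) (k : ℕ) (γ : ℕ → Bool) : ℕ → ℤ → ℕ × ℕ :=
  fun j t => vertexAt (adicIter ξ t γ) (k + j)

open Classical in
/-- The return time r_n of the Kink Lemma, where `g` is the move of γ leaving (i,j). -/
noncomputable def kinkReturn (ξ : ℕ × ℕ → Bool) (i j : ℕ) (g : Bool) : ℕ :=
  let n := i + j
  if MoveMax ξ (i, j) g ∧ MoveMin ξ (i, j) (!g) then n.choose j
  else if (MoveMin ξ (i, j) g ∧ MoveMin ξ (i, j) (!g) ∧ g = true) ∨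
          (MoveMax ξ (i, j) g ∧ MoveMax ξ (i, j) (!g) ∧ g = false) then (n + 1).choose (j + 1)
  else if (MoveMin ξ (i, j) g ∧ MoveMin ξ (i, j) (!g) ∧ g = false) ∨
          (MoveMax ξ (i, j) g ∧ MoveMax ξ (i, j) (!g) ∧ g = true) then (n + 1).choose j
  else (n + 1).choose j + n.choose (j + 1)

/-- Convert a length-k list of moves to a function `Fin k → Bool`. -/
def segFn (k : ℕ) (w : List Bool) : Fin k → Bool := fun idx => w.getD idx false

/-- The subshift Σ_k of the k-codings: sequences all of whose finite subblocks occur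
in some level-k coded basic block. -/
def SigmaK (ξ : ℕ × ℕ → Bool) (k : ℕ) : Set (ℤ → (Fin k → Bool)) :=
  {ω | ∀ (s : ℤ) (l : ℕ), ∃ p : ℕ × ℕ,
    ((List.range l).map fun u => ω (s + u)) <:+: (codedBlock ξ k p).map (segFn k)}

/-- The subshift Σ_ξ ⊆ {a,b}^ℤ of sequences all of whose finite subblocks occur in
some basic block B_ξ(x,y). -/
def SigmaXi (ξ : ℕ × ℕ → Bool) : Set (ℤ → Bool) :=
  {ω | ∀ (s : ℤ) (l : ℕ), ∃ p : ℕ × ℕ,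
    ((List.range l).map fun u => ω (s + u)) <:+: basicBlock ξ p}

/-- The big subshift Σ: sequences all of whose finite subblocks occur in some basic
block B_ξ(x,y) for some ordering ξ. -/
def BigShift : Set (ℤ → Bool) :=
  {ω | ∀ (s : ℤ) (l : ℕ), ∃ (ξ : ℕ × ℕ → Bool) (p : ℕ × ℕ),
    ((List.range l).map fun u => ω (s + u)) <:+: basicBlock ξ p}

/-!
An all-ξ-minimal (or all-ξ-maximal) path is determined on its first `M` levels by its vertex at
level `M`, because the minimal (maximal) edge into a vertex is unique; so there are only `M + 1`
such initial segments of each kind. Hence the paths that agree with one of them from level `N`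
on lie, for every `m`, in `2 (N + m + 1)` cylinders fixing the levels `N, …, N + m - 1`, each of
`μ_α`-measure at most `max(α, 1 - α) ^ m`. This tends to `0` as `m → ∞`, and `X'_ξ` is the
countable union of these sets over `N`.
-/

open Finset MeasureTheory Filter Topology

lemma vertexAt_zero (γ : ℕ → Bool) : vertexAt γ 0 = (0, 0) := by
  simp [vertexAt]

lemma vertexAt_succ (γ : ℕ → Bool) (n : ℕ) :
    vertexAt γ (n + 1) = childOf (vertexAt γ n) (γ n) := by
  cases hb : γ n <;> simp [vertexAt, childOf, Finset.range_add_one, Finset.filter_insert, hb]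

lemma vertexAt_mem_antidiagonal (γ : ℕ → Bool) (n : ℕ) : vertexAt γ n ∈ antidiagonal n := by
  induction n with
  | zero => simp [vertexAt_zero]
  | succ n ih =>
    rw [HasAntidiagonal.mem_antidiagonal] at ih ⊢
    rw [vertexAt_succ]
    cases γ n <;> simp only [childOf, Bool.false_eq_true, ↓reduceIte] <;> omega

lemma path_vertexAt_of_forall {P : ℕ × ℕ → Bool → Prop} {path : ℕ × ℕ → List Bool}
    (h0 : path (0, 0) = []) (hstep : ∀ v m, P v m → path (childOf v m) = path v ++ [m])
    {γ : ℕ → Bool} (hγ : ∀ i, P (vertexAt γ i) (γ i)) (n : ℕ) :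
    path (vertexAt γ n) = (List.range n).map γ := by
  induction n with
  | zero => simp [vertexAt_zero, h0]
  | succ n ih =>
    rw [vertexAt_succ, hstep _ _ (hγ n), ih, List.range_succ, List.map_append,
      List.map_singleton]

lemma minPath_childOf (ξ : ℕ × ℕ → Bool) (v : ℕ × ℕ) (m : Bool) (h : MoveMin ξ v m) :
    minPath ξ (childOf v m) = minPath ξ v ++ [m] := by
  obtain ⟨x, y⟩ := v
  cases m
  · cases y with
    | zero => simp [childOf, minPath]
    | succ y =>
      have hξ : ξ (x + 1, y + 1) = true := by simpa [MoveMin, childOf] using h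
      simp [childOf, minPath, hξ]
  · cases x with
    | zero => simp [childOf, minPath]
    | succ x =>
      have hξ : ξ (x + 1, y + 1) = false := by simpa [MoveMin, childOf] using h
      simp [childOf, minPath, hξ]

lemma maxPath_childOf (ξ : ℕ × ℕ → Bool) (v : ℕ × ℕ) (m : Bool) (h : MoveMax ξ v m) :
    maxPath ξ (childOf v m) = maxPath ξ v ++ [m] := by
  obtain ⟨x, y⟩ := v
  cases m
  · cases y with
    | zero => simp [childOf, maxPath]
    | succ y =>
      have hξ : ξ (x + 1, y + 1) = false := by simpa [MoveMax, childOf] using h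
      simp [childOf, maxPath, hξ]
  · cases x with
    | zero => simp [childOf, maxPath]
    | succ x =>
      have hξ : ξ (x + 1, y + 1) = true := by simpa [MoveMax, childOf] using h
      simp [childOf, maxPath, hξ]

lemma minPath_vertexAt {ξ : ℕ × ℕ → Bool} {γ : ℕ → Bool} (hγ : γ ∈ XMin ξ) (n : ℕ) :
    minPath ξ (vertexAt γ n) = (List.range n).map γ :=
  path_vertexAt_of_forall (by rw [minPath]) (minPath_childOf ξ) hγ n

lemma maxPath_vertexAt {ξ : ℕ × ℕ → Bool} {γ : ℕ → Bool} (hγ : γ ∈ XMax ξ) (n : ℕ) :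
    maxPath ξ (vertexAt γ n) = (List.range n).map γ :=
  path_vertexAt_of_forall (by rw [maxPath]) (maxPath_childOf ξ) hγ n

def cylinderIco (N M : ℕ) (f : ℕ → Bool) : Set (ℕ → Bool) :=
  {γ | ∀ i ∈ Finset.Ico N M, γ i = f i}

def agreesFrom (D : Set (ℕ → Bool)) (N : ℕ) : Set (ℕ → Bool) :=
  {γ | ∃ δ ∈ D, ∀ n, N ≤ n → γ n = δ n}

lemma XPrime_subset_iUnion_agreesFrom (ξ : ℕ × ℕ → Bool) :
    XPrime ξ ⊆ ⋃ N, agreesFrom (XMin ξ ∪ XMax ξ) N := by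
  rintro γ ⟨δ, hδ, N, hN⟩
  exact Set.mem_iUnion.2 ⟨N, δ, hδ, hN⟩

lemma agreesFrom_subset_biUnion_cylinderIco (ξ : ℕ × ℕ → Bool) (N M : ℕ) :
    agreesFrom (XMin ξ ∪ XMax ξ) N ⊆ ⋃ v ∈ antidiagonal M,
      (cylinderIco N M (fun i => (minPath ξ v).getD i false) ∪
        cylinderIco N M (fun i => (maxPath ξ v).getD i false)) := by
  rintro γ ⟨δ, hδ, hγδ⟩
  have hprefix : ∀ i ∈ Finset.Ico N M, γ i = ((List.range M).map δ).getD i false := by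
    intro i hi
    rw [Finset.mem_Ico] at hi
    simp [hγδ i hi.1, hi.2]
  refine Set.mem_biUnion (vertexAt_mem_antidiagonal δ M) ?_
  rcases hδ with hδ | hδ
  · exact Or.inl fun i hi => by rw [minPath_vertexAt hδ]; exact hprefix i hi
  · exact Or.inr fun i hi => by rw [maxPath_vertexAt hδ]; exact hprefix i hi

/-- The cylinders over initial segments form a generating π-system, so this characterizes the
product of Bernoulli measures with weights `p`. -/
def IsBernoulliMeasure (μ : Measure (ℕ → Bool)) (p : Bool → ℝ) : Prop :=
  ∀ (n : ℕ) (f : ℕ → Bool),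
    μ {γ | ∀ i < n, γ i = f i} = ∏ i ∈ Finset.range n, ENNReal.ofReal (p (f i))

section Bernoulli

variable {μ : Measure (ℕ → Bool)} {p : Bool → ℝ}

lemma measure_cylinderIco_le (hp0 : ∀ b, 0 ≤ p b) (hp1 : p false + p true = 1)
    (hμ : IsBernoulliMeasure μ p) (N M : ℕ) (f : ℕ → Bool) :
    μ (cylinderIco N M f) ≤ ENNReal.ofReal (∏ i ∈ Finset.Ico N M, p (f i)) := by
  induction N generalizing f with
  | zero =>
    have hcyl : cylinderIco 0 M f = {γ | ∀ i < M, γ i = f i} := by ext; simp [cylinderIco]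
    rw [hcyl, hμ, ← Finset.range_eq_Ico, ENNReal.ofReal_prod_of_nonneg fun _ _ => hp0 _]
  | succ N ih =>
    rcases lt_or_ge N M with hNM | hMN
    · have hcover : cylinderIco (N + 1) M f ⊆
          cylinderIco N M (Function.update f N false) ∪
            cylinderIco N M (Function.update f N true) := by
        intro γ hγ
        have hmem : γ ∈ cylinderIco N M (Function.update f N (γ N)) := by
          intro i hi
          rcases eq_or_ne i N with rfl | hiN
          · rw [Function.update_self]
          · rw [Function.update_of_ne hiN]
            exact hγ i (by simp only [Finset.mem_Ico] at hi ⊢; omega)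
        cases h : γ N <;> rw [h] at hmem
        exacts [Or.inl hmem, Or.inr hmem]
      have hIco : Finset.Ico N M = insert N (Finset.Ico (N + 1) M) :=
        (Finset.insert_Ico_add_one_left_eq_Ico hNM).symm
      have hprod : ∀ b, ∏ i ∈ Finset.Ico N M, p (Function.update f N b i) =
          p b * ∏ i ∈ Finset.Ico (N + 1) M, p (f i) := by
        intro b
        rw [hIco, Finset.prod_insert (by simp), Function.update_self]
        congr 1
        refine Finset.prod_congr rfl fun i hi => ?_
        rw [Function.update_of_ne (by simp only [Finset.mem_Ico] at hi; omega)]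
      have hrest : 0 ≤ ∏ i ∈ Finset.Ico (N + 1) M, p (f i) :=
        Finset.prod_nonneg fun _ _ => hp0 _
      calc μ (cylinderIco (N + 1) M f)
          ≤ μ (cylinderIco N M (Function.update f N false)) +
              μ (cylinderIco N M (Function.update f N true)) :=
            (measure_mono hcover).trans (measure_union_le _ _)
        _ ≤ ENNReal.ofReal (p false * ∏ i ∈ Finset.Ico (N + 1) M, p (f i)) +
              ENNReal.ofReal (p true * ∏ i ∈ Finset.Ico (N + 1) M, p (f i)) := by
            rw [← hprod, ← hprod]
            exact add_le_add (ih _) (ih _)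
        _ = ENNReal.ofReal (∏ i ∈ Finset.Ico (N + 1) M, p (f i)) := by
            rw [← ENNReal.ofReal_add (mul_nonneg (hp0 _) hrest) (mul_nonneg (hp0 _) hrest),
              ← add_mul, hp1, one_mul]
    · have huniv : μ Set.univ = 1 := by simpa using hμ 0 f
      rw [Finset.Ico_eq_empty (by omega), Finset.prod_empty, ENNReal.ofReal_one, ← huniv]
      exact measure_mono (Set.subset_univ _)

lemma measure_cylinderIco_le_pow (hp0 : ∀ b, 0 ≤ p b) (hp1 : p false + p true = 1)
    (hμ : IsBernoulliMeasure μ p) {r : ℝ} (hpr : ∀ b, p b ≤ r) (N M : ℕ) (f : ℕ → Bool) :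
    μ (cylinderIco N M f) ≤ ENNReal.ofReal (r ^ (M - N)) := by
  refine (measure_cylinderIco_le hp0 hp1 hμ N M f).trans (ENNReal.ofReal_le_ofReal ?_)
  calc ∏ i ∈ Finset.Ico N M, p (f i) ≤ ∏ _i ∈ Finset.Ico N M, r :=
        Finset.prod_le_prod (fun _ _ => hp0 _) fun _ _ => hpr _
    _ = r ^ (M - N) := by rw [Finset.prod_const, Nat.card_Ico]

lemma measure_agreesFrom_le (ξ : ℕ × ℕ → Bool) (hp0 : ∀ b, 0 ≤ p b)
    (hp1 : p false + p true = 1) (hμ : IsBernoulliMeasure μ p) {r : ℝ} (hpr : ∀ b, p b ≤ r)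
    (N m : ℕ) :
    μ (agreesFrom (XMin ξ ∪ XMax ξ) N) ≤ ENNReal.ofReal (2 * (N + m + 1) * r ^ m) := by
  have hr : 0 ≤ r := (hp0 true).trans (hpr true)
  calc μ (agreesFrom (XMin ξ ∪ XMax ξ) N)
      ≤ ∑ v ∈ antidiagonal (N + m),
          μ (cylinderIco N (N + m) (fun i => (minPath ξ v).getD i false) ∪
            cylinderIco N (N + m) (fun i => (maxPath ξ v).getD i false)) :=
        (measure_mono (agreesFrom_subset_biUnion_cylinderIco ξ N (N + m))).trans
          (measure_biUnion_finset_le _ _)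
    _ ≤ ∑ _v ∈ antidiagonal (N + m), 2 * ENNReal.ofReal (r ^ m) := by
        have hcyl := measure_cylinderIco_le_pow hp0 hp1 hμ hpr N (N + m)
        rw [Nat.add_sub_cancel_left] at hcyl
        refine Finset.sum_le_sum fun v _ => (measure_union_le _ _).trans ?_
        rw [two_mul]
        exact add_le_add (hcyl _) (hcyl _)
    _ = ENNReal.ofReal (2 * (N + m + 1) * r ^ m) := by
        rw [Finset.sum_const, Nat.card_antidiagonal, nsmul_eq_mul,
          show (2 * (N + m + 1) * r ^ m : ℝ) = ((2 * (N + m + 1) : ℕ) : ℝ) * r ^ m by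
            push_cast; ring,
          ENNReal.ofReal_mul (by positivity), ENNReal.ofReal_natCast]
        push_cast
        ring

lemma measure_agreesFrom_eq_zero (ξ : ℕ × ℕ → Bool) (hp0 : ∀ b, 0 ≤ p b)
    (hp1 : p false + p true = 1) (hμ : IsBernoulliMeasure μ p) {r : ℝ} (hpr : ∀ b, p b ≤ r)
    (hr1 : r < 1) (N : ℕ) :
    μ (agreesFrom (XMin ξ ∪ XMax ξ) N) = 0 := by
  have hr0 : 0 ≤ r := (hp0 true).trans (hpr true)
  have hbound : Tendsto (fun m : ℕ => 2 * (N + m + 1) * r ^ m) atTop (𝓝 0) := by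
    have hlin := ((tendsto_self_mul_const_pow_of_lt_one hr0 hr1).add
      ((tendsto_pow_atTop_nhds_zero_of_lt_one hr0 hr1).const_mul ((N : ℝ) + 1))).const_mul 2
    simp only [mul_zero, add_zero] at hlin
    exact hlin.congr fun m => by ring
  have hbound' :
      Tendsto (fun m : ℕ => ENNReal.ofReal (2 * (N + m + 1) * r ^ m)) atTop (𝓝 0) := by
    simpa using ENNReal.tendsto_ofReal hbound
  exact le_antisymm (ge_of_tendsto' hbound' (measure_agreesFrom_le ξ hp0 hp1 hμ hpr N)) zero_le

lemma measure_XPrime_eq_zero (ξ : ℕ × ℕ → Bool) (hp1 : p false + p true = 1)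
    (hp_lt : ∀ b, p b < 1) (hμ : IsBernoulliMeasure μ p) :
    μ (XPrime ξ) = 0 := by
  have hp0 : ∀ b, 0 ≤ p b := by
    intro b
    cases b <;> linarith [hp_lt false, hp_lt true]
  have hpr : ∀ b, p b ≤ max (p false) (p true) := by
    intro b
    cases b
    exacts [le_max_left _ _, le_max_right _ _]
  exact measure_mono_null (XPrime_subset_iUnion_agreesFrom ξ) <| measure_iUnion_null <|
    measure_agreesFrom_eq_zero ξ hp0 hp1 hμ hpr (max_lt (hp_lt false) (hp_lt true))

end Bernoulli

open MeasureTheory in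
theorem stmt0 (ξ : ℕ × ℕ → Bool) (α : ℝ) (hα0 : 0 < α) (hα1 : α < 1)
    (μ : Measure (ℕ → Bool))
    (hμ : ∀ (n : ℕ) (f : ℕ → Bool),
      μ {γ | ∀ i < n, γ i = f i} =
        ∏ i ∈ Finset.range n, ENNReal.ofReal (if f i then α else 1 - α)) :
    μ (XPrime ξ) = 0 :=
  measure_XPrime_eq_zero (p := fun b => if b then α else 1 - α) ξ (by simp)
    (by simp [hα1, hα0]) hμ
end

section
/- For every ordering ξ of the Pascal graph and every n ≥ 1, distinct vertices at level n have distinct basic blocks: if x+y = x'+y' = n and (x,y) ≠ (x',y'), then B_ξ(x,y) ≠ B_ξ(x',y'). -/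
private lemma choose_lt_succ' {m a : ℕ} (h : 2*a+2 ≤ m) : m.choose a < m.choose (a+1) := by
  have h1 : m.choose (a+1) * (a+1) = m.choose a * (m - a) := Nat.choose_succ_right_eq m a
  have hpos : 0 < m.choose a := Nat.choose_pos (by omega)
  have h2 : m.choose a * (a+1) < m.choose a * (m - a) :=
    (Nat.mul_lt_mul_left hpos).mpr (by omega)
  have := h1 ▸ h2
  exact Nat.lt_of_mul_lt_mul_right this

private lemma choose_le_chain' {m : ℕ} : ∀ b a, a ≤ b → 2*b ≤ m → m.choose a ≤ m.choose b := by
  intro b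
  induction b with
  | zero => intro a ha _; simp [Nat.le_zero.mp ha]
  | succ b ih =>
    intro a ha hm
    rcases Nat.eq_or_lt_of_le ha with rfl | hlt
    · exact le_refl _
    · calc m.choose a ≤ m.choose b := ih a (by omega) (by omega)
        _ ≤ m.choose (b+1) := le_of_lt (choose_lt_succ' (by omega))

private lemma choose_strict' {m a b : ℕ} (hab : a < b) (hsum : a + b < m) :
    m.choose a < m.choose b := by
  set b' := min b (m - b) with hb'
  have hab' : a < b' := by omega
  have h2b' : 2 * b' ≤ m := by omega
  have hbb : m.choose b' = m.choose b := by
    rcases le_or_gt b (m - b) with h | h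
    · simp [hb', min_eq_left h]
    · have : b' = m - b := by omega
      rw [this]
      exact Nat.choose_symm (by omega)
  calc m.choose a < m.choose (a+1) := choose_lt_succ' (by omega)
    _ ≤ m.choose b' := choose_le_chain' b' (a+1) (by omega) h2b'
    _ = m.choose b := hbb

private lemma choose_pair_inj {n x x' : ℕ} (hn : 1 ≤ n) (h1 : x ≤ n) (h2 : x' ≤ n)
    (hl : n.choose x = n.choose x') (hc : (n-1).choose x = (n-1).choose x') : x = x' := by
  by_contra hne
  -- wlog x < x'
  wlog hlt : x < x' generalizing x x'
  · exact this h2 h1 hl.symm hc.symm (Ne.symm hne) (by omega)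
  rcases lt_trichotomy (x + x') n with hs | hs | hs
  · exact absurd hl (Nat.ne_of_lt (choose_strict' hlt hs))
  · -- x + x' = n
    rcases Nat.eq_zero_or_pos x with rfl | hx
    · -- x' = n
      have hx' : x' = n := by omega
      rw [hx'] at hc
      have : (n-1).choose n = 0 := Nat.choose_eq_zero_of_lt (by omega)
      simp [this, Nat.choose_zero_right] at hc
    · have hxm : x - 1 ≤ n - 1 := by omega
      have hsym : (n-1).choose x' = (n-1).choose (x-1) := by
        have : x' = (n-1) - (x-1) := by omega
        rw [this]
        exact Nat.choose_symm hxm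
      rw [hsym] at hc
      have : (n-1).choose (x-1) < (n-1).choose x :=
        choose_strict' (by omega) (by omega)
      omega
  · set a := n - x' with ha
    set b := n - x with hb
    have hla : n.choose x' = n.choose a := (Nat.choose_symm h2).symm
    have hlb : n.choose x = n.choose b := (Nat.choose_symm h1).symm
    have : n.choose a < n.choose b := choose_strict' (by omega) (by omega)
    omega


private lemma bb_length (ξ : ℕ × ℕ → Bool) :
    ∀ n x y, x + y = n → 1 ≤ n → (basicBlock ξ (x, y)).length = n.choose x := by
  intro n
  induction n using Nat.strong_induction_on with
  | _ n ih =>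
    intro x y hxy hn
    match x, y with
    | 0, 0 => omega
    | x+1, 0 =>
        simp [basicBlock, ← hxy, Nat.choose_self]
    | 0, y+1 =>
        simp [basicBlock, ← hxy]
    | x+1, y+1 =>
        have h1 := ih (x + (y+1)) (by omega) x (y+1) rfl (by omega)
        have h2 := ih ((x+1) + y) (by omega) (x+1) y rfl (by omega)
        rw [show (x+1) + y = x + (y+1) by omega] at h2
        rw [basicBlock]
        subst hxy
        split <;>
          simp only [List.length_append, h1, h2] <;>
          rw [show x + 1 + (y + 1) = (x + (y+1)) + 1 by omega, Nat.choose_succ_succ'] <;>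
          omega

private lemma bb_count (ξ : ℕ × ℕ → Bool) :
    ∀ n x y, x + y = n → 1 ≤ n → (basicBlock ξ (x, y)).count true = (n-1).choose x := by
  intro n
  induction n using Nat.strong_induction_on with
  | _ n ih =>
    intro x y hxy hn
    match x, y with
    | 0, 0 => omega
    | x+1, 0 =>
        have : n - 1 < x + 1 := by omega
        simp [basicBlock, Nat.choose_eq_zero_of_lt this]
    | 0, y+1 =>
        simp [basicBlock]
    | x+1, y+1 =>
        have h1 := ih (x + (y+1)) (by omega) x (y+1) rfl (by omega)
        have h2 := ih ((x+1) + y) (by omega) (x+1) y rfl (by omega)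
        rw [basicBlock]
        subst hxy
        have hp : (x + 1 + (y + 1) - 1) = (x + (y+1) - 1) + 1 := by omega
        have hq : x + (y+1) - 1 = (x+1) + y - 1 := by omega
        split <;>
          simp only [List.count_append, h1, h2, hp, Nat.choose_succ_succ', ← hq] <;>
          omega

theorem stmt3 (ξ : ℕ × ℕ → Bool) (n : ℕ) (hn : 1 ≤ n) (x y x' y' : ℕ)
    (hxy : x + y = n) (hxy' : x' + y' = n) (hne : (x, y) ≠ (x', y')) :
    basicBlock ξ (x, y) ≠ basicBlock ξ (x', y') := by
  intro h
  have hl : n.choose x = n.choose x' := by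
    rw [← bb_length ξ n x y hxy hn, ← bb_length ξ n x' y' hxy' hn, h]
  have hc : (n-1).choose x = (n-1).choose x' := by
    rw [← bb_count ξ n x y hxy hn, ← bb_count ξ n x' y' hxy' hn, h]
  have hx : x = x' := choose_pair_inj hn (by omega) (by omega) hl hc
  exact hne (by simp [hx]; omega)
end

section
/- Let ξ be an ordering of the Pascal graph, k ≥ 1, and γ ∈ X ∖ X'_ξ a path that passes through a vertex (i,j) with i > 0 and j > 0 and then through (i+1,j+1), such that the edge of γ entering (i+1,j+1) is ξ-minimal. Let n = i+j ≥ k, let γ_{n+1} denote the edge of γ leaving (i,j), and let e denote the other edge with source (i,j). Define r_n as follows, according to whether γ_{n+1} is ξ-maximal or ξ-minimal, whether e is ξ-maximal or ξ-minimal, and whether γ_{n+1} has range (i+1,j) (case LR) or (i,j+1) (case RL): r_n = C(n,j) in cases (max, min, LR) and (max, min, RL); r_n = C(n+1,j+1) in cases (min, min, RL) and (max, max, LR); r_n = C(n+1,j) in cases (min, min, LR) and (max, max, RL); r_n = C(n+1,j) + C(n,j+1) in cases (min, max, LR) and (min, max, RL). Then T_ξ^{r_n}γ and γ agree on their first n edges.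 Consequently, if x is the path that agrees with γ after level n and is all-ξ-minimal from the root to (i,j), z is the path that agrees with γ after level n and is all-ξ-maximal from the root to (i,j), and m, l ≥ 0 satisfy T_ξ^m x = γ and T_ξ^l γ = z, then d(σ^{r_n} ω_k(γ), ω_k(γ)) ≤ 2^{−min(m,l)}, where d(ω,ω') = 2^{−min{|t| : ω_t ≠ ω'_t}} and σ is the left shift on 𝒫_k^ℤ. -/
lemma Function.iterate_eq_iterate_of_notMem_periodicPts {α : Type*} {f : α → α} {x y : α}
    {a b : ℕ} (hy : y ∉ Function.periodicPts f) (ha : f^[a] x = y) (hb : f^[b] x = y) : a = b := by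
  wlog hab : a ≤ b generalizing a b
  · exact (this hb ha (by omega)).symm
  obtain ⟨c, rfl⟩ := Nat.exists_eq_add_of_le hab
  by_contra hne
  refine hy (Function.mk_mem_periodicPts (n := c) (by omega) ?_)
  rw [Function.IsPeriodicPt, Function.IsFixedPt, ← ha, ← Function.iterate_add_apply, add_comm, hb,
    ha]

namespace PascalAdic

variable {ξ : ℕ × ℕ → Bool}

/-- `omegaCode ξ k γ t` is `initSeg (adicIter ξ t γ) k` by definition. -/
def initSeg (γ : ℕ → Bool) (N : ℕ) : List Bool := (List.range N).map γ

lemma initSeg_succ (γ : ℕ → Bool) (N : ℕ) : initSeg γ (N + 1) = initSeg γ N ++ [γ N] := by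
  simp [initSeg, List.range_succ]

@[simp] lemma length_initSeg (γ : ℕ → Bool) (N : ℕ) : (initSeg γ N).length = N := by
  simp [initSeg]

lemma initSeg_eq_initSeg_iff {γ₁ γ₂ : ℕ → Bool} {N : ℕ} :
    initSeg γ₁ N = initSeg γ₂ N ↔ ∀ idx < N, γ₁ idx = γ₂ idx := by
  simp [initSeg, List.map_inj_left]

lemma take_initSeg (γ : ℕ → Bool) {k N : ℕ} (h : k ≤ N) :
    (initSeg γ N).take k = initSeg γ k := by
  rw [initSeg, ← List.map_take, List.take_range, Nat.min_eq_left h, initSeg]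

lemma initSeg_length_eq_of_eq_append {γ : ℕ → Bool} {N : ℕ} {p u : List Bool}
    (h : initSeg γ N = p ++ u) : initSeg γ p.length = p := by
  have hle : p.length ≤ N := by
    have := congrArg List.length h
    simp only [length_initSeg, List.length_append] at this
    omega
  rw [← take_initSeg γ hle, h, List.take_left]

lemma eq_of_initSeg_eq {γ₁ γ₂ : ℕ → Bool} {N : ℕ} (h : initSeg γ₁ N = initSeg γ₂ N)
    (h' : ∀ idx, N ≤ idx → γ₁ idx = γ₂ idx) : γ₁ = γ₂ := by
  funext idx
  rcases lt_or_ge idx N with hidx | hidx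
  · exact initSeg_eq_initSeg_iff.mp h idx hidx
  · exact h' idx hidx

lemma initSeg_eq_of_getD {γ : ℕ → Bool} {w : List Bool}
    (h : ∀ idx < w.length, γ idx = w.getD idx false) : initSeg γ w.length = w := by
  refine List.ext_getElem (by simp) fun idx h₁ h₂ => ?_
  simp [initSeg, h idx h₂, List.getElem?_eq_getElem h₂]

lemma vertexAt_succ (γ : ℕ → Bool) (N : ℕ) :
    vertexAt γ (N + 1) = childOf (vertexAt γ N) (γ N) := by
  unfold vertexAt childOf
  rw [Finset.range_add_one, Finset.filter_insert, Finset.filter_insert]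
  cases h : γ N <;> simp [h, Finset.card_insert_of_notMem]

lemma vertexAt_eq_count (γ : ℕ → Bool) (N : ℕ) :
    vertexAt γ N = ((initSeg γ N).count false, (initSeg γ N).count true) := by
  induction N with
  | zero => simp [vertexAt, initSeg]
  | succ N ih =>
    rw [vertexAt_succ, ih, initSeg_succ]
    cases γ N <;> simp [childOf, List.count_append]

lemma vertexAt_fst_add_snd (γ : ℕ → Bool) (N : ℕ) : (vertexAt γ N).1 + (vertexAt γ N).2 = N := by
  rw [vertexAt_eq_count, List.count_false_add_count_true, length_initSeg]

def parent (v : ℕ × ℕ) (c : Bool) : ℕ × ℕ := if c then (v.1, v.2 - 1) else (v.1 - 1, v.2)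

@[simp] lemma parent_childOf (u : ℕ × ℕ) (c : Bool) : parent (childOf u c) c = u := by
  cases c <;> simp [childOf, parent]

lemma segList_interior (x y : ℕ) :
    segList ξ (x + 1, y + 1) =
      (segList ξ (parent (x + 1, y + 1) (!ξ (x + 1, y + 1)))).map (· ++ [!ξ (x + 1, y + 1)]) ++
      (segList ξ (parent (x + 1, y + 1) (ξ (x + 1, y + 1)))).map (· ++ [ξ (x + 1, y + 1)]) := by
  cases h : ξ (x + 1, y + 1) <;> simp [segList, h, parent]

lemma length_segList_interior (x y : ℕ) :
    (segList ξ (x + 1, y + 1)).length =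
      (segList ξ (parent (x + 1, y + 1) (!ξ (x + 1, y + 1)))).length +
        (segList ξ (parent (x + 1, y + 1) (ξ (x + 1, y + 1)))).length := by
  rw [segList_interior, List.length_append, List.length_map, List.length_map]

lemma length_segList (p : ℕ × ℕ) : (segList ξ p).length = (p.1 + p.2).choose p.2 := by
  fun_induction segList ξ p with
  | case1 => rfl
  | case2 x ih => simp [ih]
  | case3 y ih => simp [ih]
  | case4 x y _ ih₁ ih₂ | case5 x y _ ih₁ ih₂ =>
    have pascal : (x + 1 + (y + 1)).choose (y + 1) =
        (x + (y + 1)).choose (y + 1) + (x + 1 + y).choose y := by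
      rw [show x + 1 + (y + 1) = (x + y + 1) + 1 by omega, Nat.choose_succ_succ',
        show x + (y + 1) = x + y + 1 by omega, show x + 1 + y = x + y + 1 by omega, add_comm]
    simp only [List.length_append, List.length_map, ih₁, ih₂, pascal, add_comm]

lemma exists_eq_of_one_lt_length_segList {v : ℕ × ℕ} (h : 1 < (segList ξ v).length) :
    ∃ x y, v = (x + 1, y + 1) := by
  rcases v with ⟨_ | x, _ | y⟩ <;> simp_all [length_segList]

lemma count_of_mem_segList {p : ℕ × ℕ} {w : List Bool} (hw : w ∈ segList ξ p) :
    w.count false = p.1 ∧ w.count true = p.2 := by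
  fun_induction segList ξ p generalizing w with
  | case1 => simp_all
  | case2 x ih | case3 y ih =>
    obtain ⟨w', hw', rfl⟩ := List.mem_map.mp hw
    simp [List.count_append, ih hw']
  | case4 x y _ ih₁ ih₂ | case5 x y _ ih₁ ih₂ =>
    rcases List.mem_append.mp hw with hw | hw <;> obtain ⟨w', hw', rfl⟩ := List.mem_map.mp hw
    · simp [List.count_append, ih₁ hw']
    · simp [List.count_append, ih₂ hw']

lemma length_of_mem_segList {p : ℕ × ℕ} {w : List Bool} (hw : w ∈ segList ξ p) :
    w.length = p.1 + p.2 := by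
  rw [← List.count_false_add_count_true, (count_of_mem_segList hw).1, (count_of_mem_segList hw).2]

lemma vertexAt_eq_of_initSeg_mem {γ : ℕ → Bool} {N : ℕ} {v : ℕ × ℕ}
    (h : initSeg γ N ∈ segList ξ v) : vertexAt γ N = v := by
  rw [vertexAt_eq_count, (count_of_mem_segList h).1, (count_of_mem_segList h).2]

lemma append_mem_segList_childOf {u : ℕ × ℕ} {w : List Bool} (hw : w ∈ segList ξ u) (c : Bool) :
    w ++ [c] ∈ segList ξ (childOf u c) := by
  rcases u with ⟨_ | a, _ | b⟩ <;> cases c <;> rw [childOf, segList.eq_def] <;>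
    simp only [Bool.false_eq_true, ite_true, ite_false] <;> (try split_ifs) <;> simp [hw]

lemma initSeg_mem_segList (γ : ℕ → Bool) (N : ℕ) : initSeg γ N ∈ segList ξ (vertexAt γ N) := by
  induction N with
  | zero => simp [initSeg, vertexAt, segList]
  | succ N ih => rw [initSeg_succ, vertexAt_succ]; exact append_mem_segList_childOf ih _

lemma nodup_segList (p : ℕ × ℕ) : (segList ξ p).Nodup := by
  have inj (c : Bool) : Function.Injective (· ++ [c]) := fun _ _ h => List.append_cancel_right h
  fun_induction segList ξ p with
  | case1 => simp
  | case2 x ih => exact ih.map (inj _)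
  | case3 y ih => exact ih.map (inj _)
  | case4 x y _ ih₁ ih₂ | case5 x y _ ih₁ ih₂ =>
    refine List.nodup_append.mpr ⟨ih₁.map (inj _), ih₂.map (inj _), ?_⟩
    simp

lemma segList_not (p : ℕ × ℕ) : segList (fun v => !ξ v) p = (segList ξ p).reverse := by
  fun_induction segList ξ p with
  | case1 => simp [segList]
  | case2 x ih => simp [segList, ih, List.map_reverse]
  | case3 y ih => simp [segList, ih, List.map_reverse]
  | case4 x y h ih₁ ih₂ | case5 x y h ih₁ ih₂ => simp [segList, h, ih₁, ih₂, List.map_reverse]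

lemma minPath_not (p : ℕ × ℕ) : minPath (fun v => !ξ v) p = maxPath ξ p := by
  fun_induction maxPath ξ p <;> simp_all [minPath]

lemma maxPath_not (p : ℕ × ℕ) : maxPath (fun v => !ξ v) p = minPath ξ p := by
  fun_induction minPath ξ p <;> simp_all [maxPath]

lemma getLast?_segList (p : ℕ × ℕ) : (segList ξ p).getLast? = some (maxPath ξ p) := by
  fun_induction segList ξ p <;> simp_all [maxPath, List.getLast?_append]

lemma head?_segList (p : ℕ × ℕ) : (segList ξ p).head? = some (minPath ξ p) := by
  rw [← maxPath_not, ← List.getLast?_reverse, ← segList_not]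
  exact getLast?_segList p

lemma length_minPath (p : ℕ × ℕ) : (minPath ξ p).length = p.1 + p.2 :=
  length_of_mem_segList (List.mem_of_mem_head? (head?_segList p))

lemma append_eq_maxPath_childOf_iff {u : ℕ × ℕ} {c : Bool} {w : List Bool} :
    w ++ [c] = maxPath ξ (childOf u c) ↔ w = maxPath ξ u ∧ MoveMax ξ u c := by
  rcases u with ⟨_ | a, _ | b⟩ <;> cases c <;> simp only [MoveMax] <;>
    conv_lhs => rw [childOf, maxPath.eq_def]
  all_goals simp only [Bool.false_eq_true, ite_true, ite_false, childOf]
  all_goals (try split_ifs) <;> simp_all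

lemma initSeg_eq_maxPath_iff {γ : ℕ → Bool} {N : ℕ} :
    initSeg γ N = maxPath ξ (vertexAt γ N) ↔ ∀ i < N, IsMaxEdge ξ γ i := by
  induction N with
  | zero => simp [initSeg, vertexAt, maxPath]
  | succ N ih =>
    rw [initSeg_succ, vertexAt_succ, append_eq_maxPath_childOf_iff, ih, Nat.forall_lt_succ_right]
    rfl

lemma initSeg_eq_minPath_iff {γ : ℕ → Bool} {N : ℕ} :
    initSeg γ N = minPath ξ (vertexAt γ N) ↔ ∀ i < N, IsMinEdge ξ γ i := by
  rw [← maxPath_not]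
  exact initSeg_eq_maxPath_iff

lemma getElem?_segList_zero_of_isMinEdge {γ : ℕ → Bool} {N : ℕ} (h : ∀ i < N, IsMinEdge ξ γ i) :
    (segList ξ (vertexAt γ N))[0]? = some (initSeg γ N) := by
  rw [← List.head?_eq_getElem?, head?_segList, initSeg_eq_minPath_iff.mpr h]

lemma getElem?_segList_last_of_isMaxEdge {γ : ℕ → Bool} {N : ℕ} (h : ∀ i < N, IsMaxEdge ξ γ i) :
    (segList ξ (vertexAt γ N))[(segList ξ (vertexAt γ N)).length - 1]? = some (initSeg γ N) := by
  rw [← List.getLast?_eq_getElem?, getLast?_segList, initSeg_eq_maxPath_iff.mpr h]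

lemma isMaxEdge_of_getElem?_segList_of_length_le {v : ℕ × ℕ} {s N : ℕ} {γ : ℕ → Bool}
    (hγ : (segList ξ v)[s]? = some (initSeg γ N)) (hs : (segList ξ v).length ≤ s + 1) :
    ∀ i < N, IsMaxEdge ξ γ i := by
  have hlt := (List.getElem?_eq_some_iff.mp hγ).1
  have hlast := getLast?_segList (ξ := ξ) v
  rw [List.getLast?_eq_getElem?, show _ - 1 = s by omega, hγ, Option.some_inj] at hlast
  rw [← initSeg_eq_maxPath_iff, hlast, vertexAt_eq_of_initSeg_mem (List.mem_of_getElem? hγ)]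

lemma getElem?_append_map_concat_eq_some {α : Type*} {L₁ L₂ : List (List α)} {a b c : α} {s : ℕ}
    {w : List α} :
    (L₁.map (· ++ [a]) ++ L₂.map (· ++ [b]))[s]? = some (w ++ [c]) ↔
      (c = a ∧ L₁[s]? = some w) ∨ (c = b ∧ ∃ d, s = L₁.length + d ∧ L₂[d]? = some w) := by
  rcases lt_or_ge s L₁.length with hs | hs
  · rw [List.getElem?_append_left (by simpa using hs)]
    have : ∀ d, s ≠ L₁.length + d := fun d => by omega
    simp [this, eq_comm (a := c), and_comm]
  · rw [List.getElem?_append_right (by simpa using hs), List.getElem?_eq_none hs]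
    obtain ⟨d, rfl⟩ := Nat.exists_eq_add_of_le hs
    simp [eq_comm (a := c), and_comm]

/-- For interior `v`, the paths of `segList ξ v` with last move `c` form a block starting at
`edgeOffset ξ v c`; it is the second block exactly when `c` is the ξ-maximal move. -/
def edgeOffset (ξ : ℕ × ℕ → Bool) (v : ℕ × ℕ) (c : Bool) : ℕ :=
  if ξ v = c then (segList ξ (parent v (!c))).length else 0

lemma getElem?_segList_eq_some_append_iff {v : ℕ × ℕ} (hv : 0 < v.1 ∧ 0 < v.2) {s : ℕ}
    {c : Bool} {w : List Bool} :
    (segList ξ v)[s]? = some (w ++ [c]) ↔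
      ∃ d, s = edgeOffset ξ v c + d ∧ (segList ξ (parent v c))[d]? = some w := by
  obtain ⟨x, y, rfl⟩ : ∃ x y, v = (x + 1, y + 1) :=
    ⟨v.1 - 1, v.2 - 1, by ext <;> simp <;> omega⟩
  rw [segList_interior, getElem?_append_map_concat_eq_some, edgeOffset]
  cases ξ (x + 1, y + 1) <;> cases c <;> simp

open Classical in
lemma initSeg_adicT_of_isMaxEdge {γ : ℕ → Bool} {N x y : ℕ}
    (hv : vertexAt γ (N + 1) = (x + 1, y + 1)) (hmax : ∀ i < N, IsMaxEdge ξ γ i)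
    (hN : ¬ IsMaxEdge ξ γ N) :
    initSeg (adicT ξ γ) (N + 1) =
        minPath ξ (parent (x + 1, y + 1) (ξ (x + 1, y + 1))) ++ [ξ (x + 1, y + 1)] ∧
      ∀ idx, N < idx → adicT ξ γ idx = γ idx := by
  set w := minPath ξ (parent (x + 1, y + 1) (ξ (x + 1, y + 1)))
  have h : ∃ i, ¬ IsMaxEdge ξ γ i := ⟨N, hN⟩
  have hfind : Nat.find h = N := (Nat.find_eq_iff h).mpr ⟨hN, fun i hi => not_not.mpr (hmax i hi)⟩
  have hT : adicT ξ γ = fun n =>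
      if n < N then w.getD n false else if n = N then ξ (x + 1, y + 1) else γ n := by
    simp only [adicT, dif_pos h, hfind, hv]
    rfl
  have hlen : w.length = N := by
    have := vertexAt_fst_add_snd γ (N + 1)
    rw [hv] at this
    rw [length_minPath]
    cases ξ (x + 1, y + 1) <;> simp [parent] <;> omega
  refine ⟨?_, fun idx hidx => by simp [hT, hidx.ne', hidx.not_gt]⟩
  rw [initSeg_succ, ← hlen, initSeg_eq_of_getD fun idx hidx => by simp [hT, hlen ▸ hidx], hlen]
  simp [hT]

lemma getElem?_segList_adicT_of_last {γ : ℕ → Bool} {N x y d : ℕ}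
    (hv : vertexAt γ (N + 1) = (x + 1, y + 1))
    (hd : (segList ξ (vertexAt γ N))[d]? = some (initSeg γ N))
    (hlast : (segList ξ (vertexAt γ N)).length = d + 1)
    (hs : edgeOffset ξ (x + 1, y + 1) (γ N) + d + 1 < (segList ξ (x + 1, y + 1)).length) :
    (segList ξ (x + 1, y + 1))[edgeOffset ξ (x + 1, y + 1) (γ N) + d + 1]? =
        some (initSeg (adicT ξ γ) (N + 1)) ∧
      ∀ idx, N < idx → adicT ξ γ idx = γ idx := by
  have hu : parent (x + 1, y + 1) (γ N) = vertexAt γ N := by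
    rw [← hv, vertexAt_succ, parent_childOf]
  -- `γ N` cannot be the maximal move, since its block would then end the whole list
  have hc : γ N = !ξ (x + 1, y + 1) := by
    by_contra hne
    have hmax : ξ (x + 1, y + 1) = γ N := by simpa [eq_comm] using hne
    have := length_segList_interior (ξ := ξ) x y
    rw [edgeOffset, if_pos hmax] at hs
    rw [hmax, hu] at this
    omega
  have hN : ¬ IsMaxEdge ξ γ N := by
    unfold IsMaxEdge MoveMax
    rw [← vertexAt_succ, hv, hc]
    simp
  obtain ⟨h₁, h₂⟩ :=
    initSeg_adicT_of_isMaxEdge hv (isMaxEdge_of_getElem?_segList_of_length_le hd (by omega)) hN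
  refine ⟨?_, h₂⟩
  rw [h₁]
  refine (getElem?_segList_eq_some_append_iff (by simp)).mpr ⟨0, ?_, ?_⟩
  · rw [edgeOffset, if_neg (by simp [hc]), edgeOffset, if_pos rfl, ← hc, hu]
    omega
  · rw [← List.head?_eq_getElem?, head?_segList]

lemma adicT_step {v : ℕ × ℕ} {s N : ℕ} {γ : ℕ → Bool}
    (hγ : (segList ξ v)[s]? = some (initSeg γ N)) (hs : s + 1 < (segList ξ v).length) :
    (segList ξ v)[s + 1]? = some (initSeg (adicT ξ γ) N) ∧
      ∀ idx, N ≤ idx → adicT ξ γ idx = γ idx := by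
  have hv := vertexAt_eq_of_initSeg_mem (List.mem_of_getElem? hγ)
  induction N generalizing v s with
  | zero =>
    simp [← hv, vertexAt, segList] at hs
  | succ N ih =>
    obtain ⟨x, y, rfl⟩ := exists_eq_of_one_lt_length_segList (by omega : 1 < (segList ξ v).length)
    rw [initSeg_succ] at hγ
    obtain ⟨d, rfl, hd⟩ := (getElem?_segList_eq_some_append_iff (by simp)).mp hγ
    have hu : parent (x + 1, y + 1) (γ N) = vertexAt γ N := by
      rw [← hv, vertexAt_succ, parent_childOf]
    rw [hu] at hd
    have hd_lt : d < (segList ξ (vertexAt γ N)).length := (List.getElem?_eq_some_iff.mp hd).1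
    by_cases hlast : d + 1 < (segList ξ (vertexAt γ N)).length
    · obtain ⟨h₁, h₂⟩ := ih hd hlast rfl
      refine ⟨?_, fun idx hidx => h₂ idx (by omega)⟩
      rw [initSeg_succ, h₂ N le_rfl, add_assoc]
      exact (getElem?_segList_eq_some_append_iff (by simp)).mpr ⟨d + 1, rfl, hu ▸ h₁⟩
    · obtain ⟨h₁, h₂⟩ := getElem?_segList_adicT_of_last hv hd (by omega) hs
      exact ⟨h₁, fun idx hidx => h₂ idx (by omega)⟩

lemma adicT_iterate {v : ℕ × ℕ} {s N : ℕ} {γ : ℕ → Bool}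
    (hγ : (segList ξ v)[s]? = some (initSeg γ N)) {q : ℕ} (hq : s + q < (segList ξ v).length) :
    (segList ξ v)[s + q]? = some (initSeg ((adicT ξ)^[q] γ) N) ∧
      ∀ idx, N ≤ idx → (adicT ξ)^[q] γ idx = γ idx := by
  induction q with
  | zero => exact ⟨hγ, fun _ _ => rfl⟩
  | succ q ih =>
    obtain ⟨h₁, h₂⟩ := ih (by omega)
    obtain ⟨h₃, h₄⟩ := adicT_step h₁ (by omega)
    rw [Function.iterate_succ_apply']
    exact ⟨h₃, fun idx hidx => (h₄ idx hidx).trans (h₂ idx hidx)⟩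

lemma iterate_adicT_eq_of_getElem? {v : ℕ × ℕ} {s q N : ℕ} {ζ ζ' : ℕ → Bool}
    (hζ : (segList ξ v)[s]? = some (initSeg ζ N))
    (hζ' : (segList ξ v)[s + q]? = some (initSeg ζ' N))
    (htail : ∀ idx, N ≤ idx → ζ idx = ζ' idx) : (adicT ξ)^[q] ζ = ζ' := by
  obtain ⟨h₁, h₂⟩ := adicT_iterate hζ (List.getElem?_eq_some_iff.mp hζ').1
  exact eq_of_initSeg_eq (Option.some_inj.mp (h₁.symm.trans hζ'))
    fun idx hidx => (h₂ idx hidx).trans (htail idx hidx)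

open Classical in
lemma adicTInv_eq_adicT_not : adicTInv ξ = adicT (fun v => !ξ v) := by
  funext γ
  by_cases h : ∃ i, ¬ IsMinEdge ξ γ i
  · have h' : ∃ i, ¬ IsMaxEdge (fun v => !ξ v) γ i := h
    have hfind : Nat.find h' = Nat.find h := rfl
    rw [adicTInv, adicT, dif_pos h, dif_pos h', hfind]
    simp only [minPath_not]
    cases ξ (vertexAt γ (Nat.find h + 1)) <;> rfl
  · have h' : ¬ ∃ i, ¬ IsMaxEdge (fun v => !ξ v) γ i := h
    rw [adicTInv, adicT, dif_neg h, dif_neg h']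

lemma adicTInv_iterate {v : ℕ × ℕ} {s q N : ℕ} {γ : ℕ → Bool}
    (hγ : (segList ξ v)[s + q]? = some (initSeg γ N)) :
    (segList ξ v)[s]? = some (initSeg ((adicTInv ξ)^[q] γ) N) ∧
      ∀ idx, N ≤ idx → (adicTInv ξ)^[q] γ idx = γ idx := by
  have hL : segList ξ v = (segList (fun v => !ξ v) v).reverse := by
    rw [segList_not, List.reverse_reverse]
  set L := segList (fun v => !ξ v) v
  have hlt : s + q < L.length := by
    simpa [hL] using (List.getElem?_eq_some_iff.mp hγ).1
  rw [hL, List.getElem?_reverse (by omega)] at hγ ⊢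
  rw [adicTInv_eq_adicT_not]
  have := adicT_iterate (q := q) hγ (by change _ < L.length; omega)
  rwa [show L.length - 1 - (s + q) + q = L.length - 1 - s by omega] at this

@[simp] lemma adicIter_zero (γ : ℕ → Bool) : adicIter ξ 0 γ = γ := rfl

lemma getElem?_segList_adicIter {v : ℕ × ℕ} {s N : ℕ} {γ : ℕ → Bool}
    (hγ : (segList ξ v)[s]? = some (initSeg γ N)) {t : ℤ} (h₀ : 0 ≤ s + t)
    (h₁ : s + t < (segList ξ v).length) :
    (segList ξ v)[(s + t).toNat]? = some (initSeg (adicIter ξ t γ) N) := by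
  cases t with
  | ofNat q =>
    simp only [Int.ofNat_eq_natCast] at h₀ h₁ ⊢
    rw [show ((s : ℤ) + q).toNat = s + q by omega]
    exact (adicT_iterate hγ (by omega)).1
  | negSucc a =>
    rw [show ((s : ℤ) + Int.negSucc a).toNat = s - (a + 1) by omega]
    exact (adicTInv_iterate (by rwa [show s - (a + 1) + (a + 1) = s by omega])).1

open Classical in
lemma adicT_eventually_eq (γ : ℕ → Bool) : ∃ M, ∀ idx, M ≤ idx → adicT ξ γ idx = γ idx := by
  unfold adicT
  split_ifs with h
  · exact ⟨Nat.find h + 1, fun idx hidx => by dsimp only; rw [if_neg (by omega), if_neg (by omega)]⟩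
  · exact ⟨0, fun _ _ => rfl⟩

lemma iterate_adicT_eventually_eq (γ : ℕ → Bool) (q : ℕ) :
    ∃ M, ∀ idx, M ≤ idx → (adicT ξ)^[q] γ idx = γ idx := by
  induction q with
  | zero => exact ⟨0, fun _ _ => rfl⟩
  | succ q ih =>
    obtain ⟨M₁, h₁⟩ := ih
    obtain ⟨M₂, h₂⟩ := adicT_eventually_eq (ξ := ξ) ((adicT ξ)^[q] γ)
    refine ⟨max M₁ M₂, fun idx hidx => ?_⟩
    rw [Function.iterate_succ_apply', h₂ idx (by omega), h₁ idx (by omega)]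

lemma exists_not_isMaxEdge_iterate {γ : ℕ → Bool} (hγ : γ ∉ XPrime ξ) (q : ℕ) :
    ∃ i, ¬ IsMaxEdge ξ ((adicT ξ)^[q] γ) i := by
  by_contra! hmax
  obtain ⟨M, hM⟩ := iterate_adicT_eventually_eq (ξ := ξ) γ q
  exact hγ ⟨_, Or.inr hmax, M, fun idx hidx => (hM idx hidx).symm⟩

lemma notMem_XPrime_of_eventually_eq {γ z : ℕ → Bool} {N : ℕ} (hγ : γ ∉ XPrime ξ)
    (h : ∀ idx, N ≤ idx → z idx = γ idx) : z ∉ XPrime ξ := by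
  rintro ⟨δ, hδ, M, hM⟩
  exact hγ ⟨δ, hδ, max M N, fun idx hidx => (h idx (by omega)).symm.trans (hM idx (by omega))⟩

lemma notMem_periodicPts_adicT {γ : ℕ → Bool} (hγ : γ ∉ XPrime ξ) :
    γ ∉ Function.periodicPts (adicT ξ) := by
  rintro hper
  obtain ⟨p, hp, hpγ⟩ := Function.mem_periodicPts.mp hper
  -- below level `M` each `T^q γ`, `q < p`, has a non-maximal edge, so along the orbit the position
  -- of the initial segment of length `M` in `segList` increases strictly and cannot return
  choose f hf using exists_not_isMaxEdge_iterate hγ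
  set M := (Finset.range p).sup f + 1
  have hfM : ∀ q < p, f q < M := fun q hq =>
    Nat.lt_succ_of_le (Finset.le_sup (f := f) (Finset.mem_range.mpr hq))
  obtain ⟨s, hs⟩ := List.getElem?_of_mem (initSeg_mem_segList (ξ := ξ) γ M)
  have orbit : ∀ q ≤ p,
      (segList ξ (vertexAt γ M))[s + q]? = some (initSeg ((adicT ξ)^[q] γ) M) := by
    intro q
    induction q with
    | zero => exact fun _ => hs
    | succ q ih =>
      intro hq
      have hlt : s + q + 1 < (segList ξ (vertexAt γ M)).length := by
        by_contra hle
        have hmax := isMaxEdge_of_getElem?_segList_of_length_le (ih (by omega)) (by omega)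
        exact hf q (hmax _ (hfM q (by omega)))
      rw [← add_assoc, Function.iterate_succ_apply']
      exact (adicT_step (ih (by omega)) hlt).1
  have hreturn := orbit p le_rfl
  rw [hpγ.eq, ← hs] at hreturn
  have := (List.getElem?_inj (List.getElem?_eq_some_iff.mp hs).1 (nodup_segList _)).mp hreturn.symm
  omega

lemma moveMax_iff {i j : ℕ} (hi : 0 < i) (hj : 0 < j) (c : Bool) :
    MoveMax ξ (i, j) c ↔ ξ (childOf (i, j) c) = c := by
  cases c <;> simp [MoveMax, childOf, hi.ne', hj.ne']

lemma moveMin_iff {i j : ℕ} (hi : 0 < i) (hj : 0 < j) (c : Bool) :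
    MoveMin ξ (i, j) c ↔ ξ (childOf (i, j) c) = !c := by
  cases c <;> simp [MoveMin, childOf, hi.ne', hj.ne']

lemma edgeOffset_add_kinkReturn {i j : ℕ} (hi : 0 < i) (hj : 0 < j) (g : Bool) :
    edgeOffset ξ (childOf (i, j) g) g + kinkReturn ξ i j g =
      (segList ξ (childOf (i, j) g)).length + edgeOffset ξ (childOf (i, j) (!g)) (!g) := by
  have pascal₁ : (i + j + 1).choose (j + 1) = (i + j).choose j + (i + j).choose (j + 1) :=
    Nat.choose_succ_succ _ _
  have pascal₂ : (i + j + 1).choose j = (i + j).choose (j - 1) + (i + j).choose j := by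
    obtain ⟨j, rfl⟩ := Nat.exists_eq_add_of_lt hj
    simpa [add_assoc] using Nat.choose_succ_succ (i + j + 1) j
  simp only [kinkReturn, moveMax_iff hi hj, moveMin_iff hi hj, edgeOffset]
  cases g <;> cases hA : ξ (i + 1, j) <;> cases hB : ξ (i, j + 1) <;>
    simp [childOf, parent, length_segList, hA, hB, show i + 1 + (j - 1) = i + j by omega,
      show i + 1 + j = i + j + 1 by omega, show i - 1 + (j + 1) = i + j by omega,
      show i + (j + 1) = i + j + 1 by omega] <;> omega

lemma kink_moves {γ : ℕ → Bool} {n i j : ℕ} (hv : vertexAt γ n = (i, j))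
    (hv₂ : vertexAt γ (n + 2) = (i + 1, j + 1)) (hmin : IsMinEdge ξ γ (n + 1)) :
    γ (n + 1) = !γ n ∧ ξ (i + 1, j + 1) = γ n := by
  have hchild : childOf (childOf (i, j) (γ n)) (γ (n + 1)) = (i + 1, j + 1) := by
    rw [← hv, ← vertexAt_succ, ← vertexAt_succ, hv₂]
  have hnext : γ (n + 1) = !γ n := by
    revert hchild
    cases γ n <;> cases γ (n + 1) <;> simp [childOf]
  unfold IsMinEdge MoveMin at hmin
  rw [vertexAt_succ, hv, hchild, hnext] at hmin
  exact ⟨hnext, (by simpa using hmin : γ n = _).symm⟩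

lemma getElem?_segList_kink {i j : ℕ} (hi : 0 < i) (hj : 0 < j) {g : Bool}
    (hξ : ξ (i + 1, j + 1) = g) {d : ℕ} {p : List Bool} (hp : (segList ξ (i, j))[d]? = some p) :
    (segList ξ (i + 1, j + 1))[edgeOffset ξ (childOf (i, j) g) g + d]? =
        some (p ++ [g] ++ [!g]) ∧
      (segList ξ (i + 1, j + 1))[edgeOffset ξ (childOf (i, j) g) g + d + kinkReturn ξ i j g]? =
        some (p ++ [!g] ++ [g]) := by
  have hpos (c : Bool) : 0 < (childOf (i, j) c).1 ∧ 0 < (childOf (i, j) c).2 := by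
    cases c <;> simp [childOf] <;> omega
  have hparent (c : Bool) : parent (i + 1, j + 1) c = childOf (i, j) (!c) := by
    cases c <;> simp [parent, childOf]
  have hchild (c : Bool) :
      (segList ξ (childOf (i, j) c))[edgeOffset ξ (childOf (i, j) c) c + d]? = some (p ++ [c]) :=
    (getElem?_segList_eq_some_append_iff (hpos c)).mpr ⟨d, rfl, by rwa [parent_childOf]⟩
  have hr := edgeOffset_add_kinkReturn (ξ := ξ) hi hj g
  constructor
  · refine (getElem?_segList_eq_some_append_iff (by simp)).mpr
      ⟨edgeOffset ξ (childOf (i, j) g) g + d, ?_, ?_⟩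
    · simp [edgeOffset, hξ]
    · rw [hparent, Bool.not_not]
      exact hchild g
  · refine (getElem?_segList_eq_some_append_iff (by simp)).mpr
      ⟨edgeOffset ξ (childOf (i, j) (!g)) (!g) + d, ?_, ?_⟩
    · have : edgeOffset ξ (i + 1, j + 1) g = (segList ξ (childOf (i, j) g)).length := by
        rw [edgeOffset, if_pos hξ, hparent, Bool.not_not]
      omega
    · rw [hparent]
      exact hchild (!g)

lemma getElem?_segList_kink_initSeg {i j : ℕ} (hi : 0 < i) (hj : 0 < j) {g : Bool}
    (hξ : ξ (i + 1, j + 1) = g) {ζ : ℕ → Bool} {n d : ℕ} (h₀ : ζ n = g) (h₁ : ζ (n + 1) = !g)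
    (hd : (segList ξ (i, j))[d]? = some (initSeg ζ n)) :
    (segList ξ (i + 1, j + 1))[edgeOffset ξ (childOf (i, j) g) g + d]? =
      some (initSeg ζ (n + 2)) := by
  rw [initSeg_succ, initSeg_succ, h₀, h₁]
  exact (getElem?_segList_kink hi hj hξ hd).1

lemma adicIter_add_kinkReturn_apply {i j : ℕ} (hi : 0 < i) (hj : 0 < j) {g : Bool}
    (hξ : ξ (i + 1, j + 1) = g) {γ : ℕ → Bool} {n δ : ℕ}
    (hγ : (segList ξ (i + 1, j + 1))[edgeOffset ξ (childOf (i, j) g) g + δ]? =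
      some (initSeg γ (n + 2)))
    {t : ℤ} (h₀ : 0 ≤ δ + t) (h₁ : δ + t < (segList ξ (i, j)).length) :
    ∀ idx < n, adicIter ξ (t + kinkReturn ξ i j g) γ idx = adicIter ξ t γ idx := by
  set o := edgeOffset ξ (childOf (i, j) g) g
  set r := kinkReturn ξ i j g
  obtain ⟨p, hp⟩ : ∃ p, (segList ξ (i, j))[(δ + t).toNat]? = some p :=
    ⟨_, List.getElem?_eq_getElem (by omega)⟩
  obtain ⟨hA, hB⟩ := getElem?_segList_kink hi hj hξ hp
  have hA_lt := (List.getElem?_eq_some_iff.mp hA).1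
  have hB_lt := (List.getElem?_eq_some_iff.mp hB).1
  have hA' := getElem?_segList_adicIter hγ (t := t) (by omega) (by omega)
  have hB' := getElem?_segList_adicIter hγ (t := t + r) (by omega) (by omega)
  rw [show ((o + δ : ℕ) + t).toNat = o + (δ + t).toNat by omega, hA, Option.some_inj] at hA'
  rw [show ((o + δ : ℕ) + (t + r)).toNat = o + (δ + t).toNat + r by omega, hB,
    Option.some_inj] at hB'
  have hlen : p.length = n := by simpa using congrArg List.length hA'
  rw [← initSeg_eq_initSeg_iff, ← hlen,
    initSeg_length_eq_of_eq_append (u := [!g] ++ [g]) (by rw [← hB', List.append_assoc]),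
    initSeg_length_eq_of_eq_append (u := [g] ++ [!g]) (by rw [← hA', List.append_assoc])]

end PascalAdic

open PascalAdic in
theorem stmt8_general (ξ : ℕ × ℕ → Bool) (k : ℕ)
    (γ : ℕ → Bool) (hγ : γ ∉ XPrime ξ)
    (i j : ℕ) (hi : 0 < i) (hj : 0 < j) (n : ℕ) (hkn : k ≤ n)
    (hv : vertexAt γ n = (i, j))
    (hv2 : vertexAt γ (n + 2) = (i + 1, j + 1))
    (hminedge : IsMinEdge ξ γ (n + 1)) :
    (∀ idx < n, adicIter ξ (kinkReturn ξ i j (γ n)) γ idx = γ idx) ∧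
    (∀ (x z : ℕ → Bool) (m l : ℕ),
      vertexAt x n = (i, j) → (∀ i' < n, IsMinEdge ξ x i') → (∀ idx, n ≤ idx → x idx = γ idx) →
      vertexAt z n = (i, j) → (∀ i' < n, IsMaxEdge ξ z i') → (∀ idx, n ≤ idx → z idx = γ idx) →
      adicIter ξ m x = γ → adicIter ξ l γ = z →
      ∀ t : ℤ, t.natAbs < min m l →
        omegaCode ξ k γ (t + kinkReturn ξ i j (γ n)) = omegaCode ξ k γ t) := by
  obtain ⟨hnext, hξ⟩ := kink_moves hv hv2 hminedge
  obtain ⟨δ, hδ⟩ := List.getElem?_of_mem (hv ▸ initSeg_mem_segList (ξ := ξ) γ n)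
  have hδC := (List.getElem?_eq_some_iff.mp hδ).1
  have hγpos := getElem?_segList_kink_initSeg hi hj hξ rfl hnext hδ
  constructor
  · intro idx hidx
    simpa using adicIter_add_kinkReturn_apply hi hj hξ hγpos (t := 0) (by omega) (by omega) idx hidx
  intro x z m l hx₁ hx₂ hx₃ hz₁ hz₂ hz₃ hxγ hγz t ht
  have hxpos := getElem?_segList_kink_initSeg hi hj hξ (hx₃ n le_rfl)
    ((hx₃ (n + 1) (by omega)).trans hnext) (hx₁ ▸ getElem?_segList_zero_of_isMinEdge hx₂)
  have hzpos := getElem?_segList_kink_initSeg hi hj hξ (hz₃ n le_rfl)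
    ((hz₃ (n + 1) (by omega)).trans hnext) (hz₁ ▸ getElem?_segList_last_of_isMaxEdge hz₂)
  have hm : m = δ :=
    Function.iterate_eq_iterate_of_notMem_periodicPts (notMem_periodicPts_adicT hγ) hxγ
      (iterate_adicT_eq_of_getElem? hxpos hγpos fun idx hidx => hx₃ idx (by omega))
  have hl : l = (segList ξ (i, j)).length - 1 - δ :=
    Function.iterate_eq_iterate_of_notMem_periodicPts
      (notMem_periodicPts_adicT (notMem_XPrime_of_eventually_eq hγ hz₃)) hγz
      (iterate_adicT_eq_of_getElem? hγpos (by rwa [add_assoc, Nat.add_sub_of_le (by omega)])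
        fun idx hidx => (hz₃ idx (by omega)).symm)
  exact initSeg_eq_initSeg_iff.mpr fun idx hidx =>
    adicIter_add_kinkReturn_apply hi hj hξ hγpos (by omega) (by omega) idx (by omega)

theorem stmt8 (ξ : ℕ × ℕ → Bool) (k : ℕ) (hk : 1 ≤ k)
    (γ : ℕ → Bool) (hγ : γ ∉ XPrime ξ)
    (i j : ℕ) (hi : 0 < i) (hj : 0 < j) (n : ℕ) (hn : n = i + j) (hkn : k ≤ n)
    (hv : vertexAt γ n = (i, j))
    (hv2 : vertexAt γ (n + 2) = (i + 1, j + 1))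
    (hminedge : IsMinEdge ξ γ (n + 1)) :
    (∀ idx < n, adicIter ξ (kinkReturn ξ i j (γ n)) γ idx = γ idx) ∧
    (∀ (x z : ℕ → Bool) (m l : ℕ),
      vertexAt x n = (i, j) → (∀ i' < n, IsMinEdge ξ x i') → (∀ idx, n ≤ idx → x idx = γ idx) →
      vertexAt z n = (i, j) → (∀ i' < n, IsMaxEdge ξ z i') → (∀ idx, n ≤ idx → z idx = γ idx) →
      adicIter ξ m x = γ → adicIter ξ l γ = z →
      ∀ t : ℤ, t.natAbs < min m l →
        omegaCode ξ k γ (t + kinkReturn ξ i j (γ n)) = omegaCode ξ k γ t) :=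
  stmt8_general ξ k γ hγ i j hi hj n hkn hv hv2 hminedge
end

section
/- Let ξ and η be orderings of the Pascal graph satisfying ξ(i,1)=ξ(1,j)=η(i,1)=η(1,j)=0 for all i,j ≥ 1. Then for all x,y ≥ 1: B_ξ(x,y) = B_η(x,y) if and only if ξ(u,v) = η(u,v) for all u,v with 1 ≤ u ≤ x and 1 ≤ v ≤ y. -/
/-!
Equal orderings give equal blocks by construction. Conversely, if `B_ξ(x,y) = B_η(x,y)`
then the two orderings agree at `(x,y)`, and cutting both blocks at the common length of
`B(x,y-1)` resp. `B(x-1,y)` gives equal blocks one level down, so induction finishes.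
Agreement at `(x+1,y+1)` with `x, y ≥ 1` comes from runs: since `ξ(i,1) = 0`, `B_ξ(x,y)`
contains `a^x` but no `a^(x+1)` when `y ≥ 1`, and dually (`ξ(1,j) = 0`) it contains `b^y` but
no `b^(y+1)` when `x ≥ 1`. If `ξ(x+1,y+1) = 0` and `η(x+1,y+1) = 1`, then
`B_ξ(x+1,y) B_ξ(x,y+1) = B_η(x,y+1) B_η(x+1,y)`, so either `B_ξ(x+1,y)` is a prefix of
`B_η(x,y+1)`, carrying a run `a^(x+1)` into it, or `B_ξ(x,y+1)` is a suffix of `B_η(x+1,y)`,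
carrying a run `b^(y+1)` into it.
-/

open List

theorem List.not_replicate_infix_append_cons {α : Type*} {c d : α} (hdc : d ≠ c) {n : ℕ}
    {u v : List α} (hu : ¬ replicate n c <:+: u) (hv : ¬ replicate n c <:+: v) :
    ¬ replicate n c <:+: u ++ d :: v := by
  have hd : ∀ l, l ≠ [] → l <+: d :: v → l <:+: replicate n c → False := by
    intro l hl hpre hinf
    obtain ⟨t, rfl, -⟩ := (prefix_cons_iff.1 hpre).resolve_left hl
    exact hdc (eq_of_mem_replicate (hinf.subset mem_cons_self))
  intro h
  rcases infix_append_iff_ne_nil.1 h with h | h | ⟨l₁, l₂, -, hl₂, hR, -, hpre⟩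
  · exact hu h
  · rcases infix_cons_iff.1 h with hpre | h
    · exact hd _ (fun hn => hu (by rw [hn]; exact nil_infix)) hpre (infix_refl _)
    · exact hv h
  · exact hd l₂ hl₂ hpre (hR ▸ infix_append_right)

section basicBlock

theorem basicBlock_succ_succ (ξ : ℕ × ℕ → Bool) (x y : ℕ) :
    basicBlock ξ (x + 1, y + 1) =
      if ξ (x + 1, y + 1) then basicBlock ξ (x, y + 1) ++ basicBlock ξ (x + 1, y)
      else basicBlock ξ (x + 1, y) ++ basicBlock ξ (x, y + 1) := by
  rw [basicBlock]

theorem length_basicBlock_eq (ξ η : ℕ × ℕ → Bool) :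
    ∀ p : ℕ × ℕ, (basicBlock ξ p).length = (basicBlock η p).length
  | (0, 0) | (_ + 1, 0) | (0, _ + 1) => by simp only [basicBlock]
  | (x + 1, y + 1) => by
    have h₁ := length_basicBlock_eq ξ η (x, y + 1)
    have h₂ := length_basicBlock_eq ξ η (x + 1, y)
    rw [basicBlock_succ_succ, basicBlock_succ_succ]
    split <;> split <;> simp only [length_append] <;> omega
  termination_by p => p.1 + p.2

theorem basicBlock_transpose (ξ : ℕ × ℕ → Bool) :
    ∀ x y : ℕ, (basicBlock ξ (x, y)).reverse.map not = basicBlock (ξ ∘ Prod.swap) (y, x)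
  | 0, 0 | _ + 1, 0 | 0, _ + 1 => by simp only [basicBlock]; rfl
  | x + 1, y + 1 => by
    have h₁ := basicBlock_transpose ξ (x + 1) y
    have h₂ := basicBlock_transpose ξ x (y + 1)
    rw [basicBlock_succ_succ, basicBlock_succ_succ]
    by_cases hb : ξ (x + 1, y + 1) <;> simp [hb, h₁, h₂]
  termination_by x y => x + y

theorem basicBlock_infix_succ_right (ξ : ℕ × ℕ → Bool) (x y : ℕ) :
    basicBlock ξ (x + 1, y) <:+: basicBlock ξ (x + 1, y + 1) := by
  rw [basicBlock_succ_succ]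
  split
  · exact infix_append_right
  · exact infix_append_left

variable {ξ : ℕ × ℕ → Bool} (hξ : ∀ i, 1 ≤ i → ξ (i, 1) = false)
include hξ

theorem basicBlock_succ_one (x : ℕ) :
    basicBlock ξ (x + 1, 1) = replicate (x + 1) false ++ [true] := by
  induction x with
  | zero => simp [basicBlock_succ_succ, hξ 1 le_rfl, basicBlock]
  | succ n ih =>
    rw [basicBlock_succ_succ, hξ (n + 2) (by omega), ih]
    simp [basicBlock, replicate_succ]

theorem basicBlock_eq_append_true : ∀ x y : ℕ, 1 ≤ y → ∃ w, basicBlock ξ (x, y) = w ++ [true]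
  | 0, y + 1, _ => ⟨[], by rw [basicBlock]; rfl⟩
  | x + 1, 1, _ => ⟨_, basicBlock_succ_one hξ x⟩
  | x + 1, y + 2, _ => by
    obtain ⟨w₁, hw₁⟩ := basicBlock_eq_append_true (x + 1) (y + 1) (by omega)
    obtain ⟨w₂, hw₂⟩ := basicBlock_eq_append_true x (y + 2) (by omega)
    rw [basicBlock_succ_succ]
    split
    · exact ⟨_, by rw [hw₁, append_assoc]⟩
    · exact ⟨_, by rw [hw₂, append_assoc]⟩
  termination_by x y => x + y

theorem replicate_false_infix_basicBlock (x : ℕ) {y : ℕ} (hy : 1 ≤ y) :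
    replicate x false <:+: basicBlock ξ (x, y) := by
  cases x with
  | zero => exact nil_infix
  | succ x =>
    induction y, hy using Nat.le_induction with
    | base => rw [basicBlock_succ_one hξ]; exact infix_append_left
    | succ y _ ih => exact ih.trans (basicBlock_infix_succ_right ξ x y)

theorem not_replicate_false_infix_basicBlock :
    ∀ x y : ℕ, 1 ≤ y → ¬ replicate (x + 1) false <:+: basicBlock ξ (x, y)
  | 0, y + 1, _ => by rw [basicBlock]; simp
  | x + 1, 1, _ => by
    rw [basicBlock_succ_one hξ]
    refine not_replicate_infix_append_cons (by decide) ?_ (by simp)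
    simp [infix_replicate_iff]
  | x + 1, y + 2, _ => by
    have hcat : ∀ p q : ℕ × ℕ, 1 ≤ p.2 → ¬ replicate (x + 2) false <:+: basicBlock ξ p →
        ¬ replicate (x + 2) false <:+: basicBlock ξ q →
        ¬ replicate (x + 2) false <:+: basicBlock ξ p ++ basicBlock ξ q := by
      intro p q hp hrp hrq
      obtain ⟨w, hw⟩ := basicBlock_eq_append_true hξ p.1 p.2 hp
      rw [hw, append_assoc, singleton_append]
      exact not_replicate_infix_append_cons (by decide)
        (fun h => hrp (h.trans (hw ▸ infix_append_left))) hrq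
    have h₁ : ¬ replicate (x + 2) false <:+: basicBlock ξ (x, y + 2) := fun h =>
      not_replicate_false_infix_basicBlock x (y + 2) (by omega)
        ((replicate_succ' (n := x + 1) ▸ infix_append_left).trans h)
    have h₂ := not_replicate_false_infix_basicBlock (x + 1) (y + 1) (by omega)
    rw [basicBlock_succ_succ]
    split
    · exact hcat _ _ (by simp) h₁ h₂
    · exact hcat _ _ (by simp) h₂ h₁
  termination_by x y => x + y

end basicBlock

section transpose

variable {ξ : ℕ × ℕ → Bool} (hξ : ∀ j, 1 ≤ j → ξ (1, j) = false)
include hξ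

theorem replicate_true_infix_basicBlock {x : ℕ} (hx : 1 ≤ x) (y : ℕ) :
    replicate y true <:+: basicBlock ξ (x, y) := by
  have h := (replicate_false_infix_basicBlock (ξ := ξ ∘ Prod.swap) hξ y hx).reverse.map not
  rw [← basicBlock_transpose] at h
  simpa [Function.comp_def] using h

theorem not_replicate_true_infix_basicBlock {x : ℕ} (hx : 1 ≤ x) (y : ℕ) :
    ¬ replicate (y + 1) true <:+: basicBlock ξ (x, y) := by
  intro h
  refine not_replicate_false_infix_basicBlock (ξ := ξ ∘ Prod.swap) hξ y x hx ?_
  simpa [← basicBlock_transpose] using h.reverse.map not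

end transpose

variable {ξ η : ℕ × ℕ → Bool}

theorem basicBlock_congr :
    ∀ x y : ℕ, (∀ u v : ℕ, 1 ≤ u → u ≤ x → 1 ≤ v → v ≤ y → ξ (u, v) = η (u, v)) →
      basicBlock ξ (x, y) = basicBlock η (x, y)
  | 0, 0, _ | _ + 1, 0, _ | 0, _ + 1, _ => by simp only [basicBlock]
  | x + 1, y + 1, h => by
    have e := h (x + 1) (y + 1) (by omega) le_rfl (by omega) le_rfl
    have h₁ := basicBlock_congr (x + 1) y fun u v hu hux hv hvy => h u v hu hux hv (by omega)
    have h₂ := basicBlock_congr x (y + 1) fun u v hu hux hv hvy => h u v hu (by omega) hv hvy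
    rw [basicBlock_succ_succ, basicBlock_succ_succ, e, h₁, h₂]
  termination_by x y => x + y

theorem basicBlock_ne_of_false_of_true
    (hξ₁ : ∀ i, 1 ≤ i → ξ (i, 1) = false) (hξ₂ : ∀ j, 1 ≤ j → ξ (1, j) = false)
    (hη₁ : ∀ i, 1 ≤ i → η (i, 1) = false) (hη₂ : ∀ j, 1 ≤ j → η (1, j) = false)
    {x y : ℕ} (hx : 1 ≤ x) (hy : 1 ≤ y)
    (hξxy : ξ (x + 1, y + 1) = false) (hηxy : η (x + 1, y + 1) = true) :
    basicBlock ξ (x + 1, y + 1) ≠ basicBlock η (x + 1, y + 1) := by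
  rw [basicBlock_succ_succ, basicBlock_succ_succ, hξxy, hηxy]
  simp only [Bool.false_eq_true, if_false, if_true]
  set U := basicBlock ξ (x + 1, y)
  set V := basicBlock ξ (x, y + 1)
  set V' := basicBlock η (x, y + 1)
  set U' := basicBlock η (x + 1, y)
  intro h
  have hU : U.length = U'.length := length_basicBlock_eq ξ η _
  have hV : V.length = V'.length := length_basicBlock_eq ξ η _
  rcases le_total U.length V'.length with hle | hle
  · have hpre : U <+: V' := prefix_of_prefix_length_le (prefix_append U V)
      (h ▸ prefix_append V' U') hle
    exact not_replicate_false_infix_basicBlock hη₁ x (y + 1) (by omega)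
      ((replicate_false_infix_basicBlock hξ₁ (x + 1) hy).trans hpre.isInfix)
  · have hsuf : V <:+ U' := suffix_of_suffix_length_le (suffix_append U V)
      (h ▸ suffix_append V' U') (by omega)
    exact not_replicate_true_infix_basicBlock hη₂ (x := x + 1) (by omega) y
      ((replicate_true_infix_basicBlock hξ₂ hx (y + 1)).trans hsuf.isInfix)

theorem apply_eq_of_basicBlock_eq
    (hξ₁ : ∀ i, 1 ≤ i → ξ (i, 1) = false) (hξ₂ : ∀ j, 1 ≤ j → ξ (1, j) = false)
    (hη₁ : ∀ i, 1 ≤ i → η (i, 1) = false) (hη₂ : ∀ j, 1 ≤ j → η (1, j) = false)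
    {x y : ℕ} (h : basicBlock ξ (x + 1, y + 1) = basicBlock η (x + 1, y + 1)) :
    ξ (x + 1, y + 1) = η (x + 1, y + 1) := by
  rcases Nat.eq_zero_or_pos x with rfl | hx
  · rw [hξ₂ _ (by omega), hη₂ _ (by omega)]
  rcases Nat.eq_zero_or_pos y with rfl | hy
  · rw [hξ₁ _ (by omega), hη₁ _ (by omega)]
  cases hξxy : ξ (x + 1, y + 1) <;> cases hηxy : η (x + 1, y + 1)
  · rfl
  · exact absurd h (basicBlock_ne_of_false_of_true hξ₁ hξ₂ hη₁ hη₂ hx hy hξxy hηxy)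
  · exact absurd h.symm (basicBlock_ne_of_false_of_true hη₁ hη₂ hξ₁ hξ₂ hx hy hηxy hξxy)
  · rfl

theorem basicBlock_eq_of_succ_succ {x y : ℕ}
    (h : basicBlock ξ (x + 1, y + 1) = basicBlock η (x + 1, y + 1))
    (e : ξ (x + 1, y + 1) = η (x + 1, y + 1)) :
    basicBlock ξ (x + 1, y) = basicBlock η (x + 1, y) ∧
      basicBlock ξ (x, y + 1) = basicBlock η (x, y + 1) := by
  rw [basicBlock_succ_succ, basicBlock_succ_succ, e] at h
  split at h
  · exact (append_inj h (length_basicBlock_eq ξ η _)).symm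
  · exact append_inj h (length_basicBlock_eq ξ η _)

theorem basicBlock_eq_of_le
    (hξ₁ : ∀ i, 1 ≤ i → ξ (i, 1) = false) (hξ₂ : ∀ j, 1 ≤ j → ξ (1, j) = false)
    (hη₁ : ∀ i, 1 ≤ i → η (i, 1) = false) (hη₂ : ∀ j, 1 ≤ j → η (1, j) = false) :
    ∀ x y : ℕ, basicBlock ξ (x, y) = basicBlock η (x, y) →
      ∀ u v : ℕ, u ≤ x → v ≤ y → basicBlock ξ (u, v) = basicBlock η (u, v)
  | x + 1, y + 1, h, u, v, hu, hv => by
    obtain ⟨h₁, h₂⟩ := basicBlock_eq_of_succ_succ h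
      (apply_eq_of_basicBlock_eq hξ₁ hξ₂ hη₁ hη₂ h)
    by_cases hux : u ≤ x
    · exact basicBlock_eq_of_le hξ₁ hξ₂ hη₁ hη₂ x (y + 1) h₂ u v hux hv
    by_cases hvy : v ≤ y
    · exact basicBlock_eq_of_le hξ₁ hξ₂ hη₁ hη₂ (x + 1) y h₁ u v hu hvy
    obtain ⟨rfl, rfl⟩ : u = x + 1 ∧ v = y + 1 := by omega
    exact h
  | 0, _, _, u, v, hu, _ | _, 0, _, u, v, _, hv =>
    basicBlock_congr u v fun _ _ _ _ _ _ => by omega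
  termination_by x y => x + y

theorem stmt10_general (ξ η : ℕ × ℕ → Bool)
    (hξ1 : ∀ i, 1 ≤ i → ξ (i, 1) = false) (hξ2 : ∀ j, 1 ≤ j → ξ (1, j) = false)
    (hη1 : ∀ i, 1 ≤ i → η (i, 1) = false) (hη2 : ∀ j, 1 ≤ j → η (1, j) = false)
    (x y : ℕ) :
    basicBlock ξ (x, y) = basicBlock η (x, y) ↔
      ∀ u v : ℕ, 1 ≤ u → u ≤ x → 1 ≤ v → v ≤ y → ξ (u, v) = η (u, v) := by
  refine ⟨fun h u v hu hux hv hvy => ?_, basicBlock_congr x y⟩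
  obtain ⟨u, rfl⟩ := Nat.exists_eq_add_of_le' hu
  obtain ⟨v, rfl⟩ := Nat.exists_eq_add_of_le' hv
  exact apply_eq_of_basicBlock_eq hξ1 hξ2 hη1 hη2
    (basicBlock_eq_of_le hξ1 hξ2 hη1 hη2 x y h _ _ hux hvy)

theorem stmt10 (ξ η : ℕ × ℕ → Bool)
    (hξ1 : ∀ i, 1 ≤ i → ξ (i, 1) = false) (hξ2 : ∀ j, 1 ≤ j → ξ (1, j) = false)
    (hη1 : ∀ i, 1 ≤ i → η (i, 1) = false) (hη2 : ∀ j, 1 ≤ j → η (1, j) = false)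
    (x y : ℕ) (hx : 1 ≤ x) (hy : 1 ≤ y) :
    basicBlock ξ (x, y) = basicBlock η (x, y) ↔
      ∀ u v : ℕ, 1 ≤ u → u ≤ x → 1 ≤ v → v ≤ y → ξ (u, v) = η (u, v) :=
  stmt10_general ξ η hξ1 hξ2 hη1 hη2 x y
end

section
/- For each k ≥ 2 there are at least 2^{k−1} distinct words of length (k+1)(k+2)/2 in the language of the big subshift Σ, i.e., at least 2^{k−1} distinct words of that length each of which occurs as a subblock of some basic block B_ξ(x,y) for some ordering ξ of the Pascal graph. -/
def myXi (f : ℕ → Bool) : ℕ × ℕ → Bool := fun p => if p.1 = 1 then f p.2 else false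

def cnt (f : ℕ → Bool) : ℕ → ℕ
  | 0 => 0
  | j + 1 => cnt f j + (if f (j + 1) then 1 else 0)

lemma cnt_le (f : ℕ → Bool) : ∀ j, cnt f j ≤ j
  | 0 => le_refl _
  | j + 1 => by have := cnt_le f j; simp [cnt]; split <;> omega

lemma bb1 (f : ℕ → Bool) : ∀ j, basicBlock (myXi f) (1, j) =
    List.replicate (cnt f j) true ++ false :: List.replicate (j - cnt f j) true
  | 0 => by simp [basicBlock, cnt]
  | j + 1 => by
    have ih := bb1 f j
    have hle := cnt_le f j
    rw [show ((1:ℕ), j+1) = (0+1, j+1) from rfl, basicBlock]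
    simp only [myXi, cnt]
    by_cases h : f (j+1)
    · simp only [h, if_true, if_pos, ih, basicBlock]
      rw [show j + 1 - (cnt f j + 1) = j - cnt f j by omega]
      simp [List.replicate_succ]
    · simp only [h, if_false, Bool.false_eq_true, ite_false, ih, basicBlock]
      rw [show j + 1 - (cnt f j + 0) = (j - cnt f j) + 1 by omega]
      simp [List.replicate_succ']

lemma bb2_rec (f : ℕ → Bool) (j : ℕ) : basicBlock (myXi f) (2, j + 1) =
    basicBlock (myXi f) (2, j) ++ basicBlock (myXi f) (1, j + 1) := by
  rw [show ((2:ℕ), j+1) = (1+1, j+1) from rfl, basicBlock]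
  simp [myXi]

lemma bb1_len (f : ℕ → Bool) (j : ℕ) : (basicBlock (myXi f) (1, j)).length = j + 1 := by
  have := cnt_le f j
  rw [bb1]; simp; omega

lemma bb2_len (f : ℕ → Bool) : ∀ j, 2 * (basicBlock (myXi f) (2, j)).length = (j + 1) * (j + 2)
  | 0 => by simp [basicBlock]
  | j + 1 => by
    have ih := bb2_len f j
    rw [bb2_rec]; simp [bb1_len]; ring_nf; ring_nf at ih; omega

lemma repl_inj : ∀ (a a' : ℕ) (l l' : List Bool),
    List.replicate a true ++ false :: l = List.replicate a' true ++ false :: l' → a = a'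
  | 0, 0, _, _, _ => rfl
  | 0, a' + 1, l, l', h => by simp [List.replicate_succ] at h
  | a + 1, 0, l, l', h => by simp [List.replicate_succ] at h
  | a + 1, a' + 1, l, l', h => by
    simp only [List.replicate_succ, List.cons_append, List.cons.injEq] at h
    exact congrArg Nat.succ (repl_inj a a' l l' h.2)

lemma bb2_inj (f g : ℕ → Bool) : ∀ j, basicBlock (myXi f) (2, j) = basicBlock (myXi g) (2, j) →
    ∀ i ≤ j, cnt f i = cnt g i
  | 0, _, i, hi => by interval_cases i; rfl
  | j + 1, h, i, hi => by
    rw [bb2_rec, bb2_rec] at h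
    have hlen : (basicBlock (myXi f) (1, j+1)).length = (basicBlock (myXi g) (1, j+1)).length := by
      rw [bb1_len, bb1_len]
    obtain ⟨h1, h2⟩ := List.append_inj' h hlen
    rcases Nat.lt_or_ge i (j + 1) with hlt | hge
    · exact bb2_inj f g j h1 i (by omega)
    · have : i = j + 1 := by omega
      subst this
      rw [bb1, bb1] at h2
      exact repl_inj _ _ _ _ h2

lemma f_recover (f g : ℕ → Bool) (k : ℕ)
    (H : ∀ i ≤ k, cnt f i = cnt g i) (i : ℕ) (h1 : 1 ≤ i) (h2 : i ≤ k) : f i = g i := by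
  obtain ⟨m, rfl⟩ : ∃ m, i = m + 1 := ⟨i - 1, by omega⟩
  have e1 := H (m + 1) h2
  have e2 := H m (by omega)
  simp only [cnt] at e1
  cases hf : f (m + 1) <;> cases hg : g (m + 1) <;> simp [hf, hg] at e1 ⊢ <;> omega

theorem stmt12 (k : ℕ) (hk : 2 ≤ k) :
    2 ^ (k - 1) ≤ Set.ncard {w : List Bool | w.length = (k + 1) * (k + 2) / 2 ∧
      ∃ (ξ : ℕ × ℕ → Bool) (p : ℕ × ℕ), w <:+: basicBlock ξ p} := by
  classical
  set S := {w : List Bool | w.length = (k + 1) * (k + 2) / 2 ∧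
      ∃ (ξ : ℕ × ℕ → Bool) (p : ℕ × ℕ), w <:+: basicBlock ξ p} with hS
  have hfin : S.Finite :=
    (List.finite_length_eq Bool ((k + 1) * (k + 2) / 2)).subset fun w hw => hw.1
  let ext : (Fin (k - 1) → Bool) → ℕ → Bool := fun ε i =>
    if h : i - 1 < k - 1 then (if 1 ≤ i then ε ⟨i - 1, h⟩ else false) else false
  let F : (Fin (k - 1) → Bool) → List Bool := fun ε => basicBlock (myXi (ext ε)) (2, k)
  have hFinj : Function.Injective F := by
    intro ε ε' h
    have H := bb2_inj (ext ε) (ext ε') k h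
    funext m
    obtain ⟨m, hm⟩ := m
    have h1 : ext ε (m + 1) = ε ⟨m, hm⟩ := by
      simp only [ext]
      rw [dif_pos (show m + 1 - 1 < k - 1 by omega), if_pos (by omega)]
      congr 1
    have h2 : ext ε' (m + 1) = ε' ⟨m, hm⟩ := by
      simp only [ext]
      rw [dif_pos (show m + 1 - 1 < k - 1 by omega), if_pos (by omega)]
      congr 1
    have := f_recover (ext ε) (ext ε') k H (m + 1) (by omega) (by omega)
    rw [h1, h2] at this
    exact this
  have hmem : ∀ ε, F ε ∈ S := by
    intro ε
    refine ⟨?_, myXi (ext ε), (2, k), List.infix_refl _⟩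
    have := bb2_len (ext ε) k
    simp only [F]
    omega
  have hsub : ↑(Finset.univ.image F) ⊆ S := by
    intro w hw
    simp only [Finset.coe_image, Finset.coe_univ, Set.image_univ, Set.mem_range] at hw
    obtain ⟨ε, rfl⟩ := hw
    exact hmem ε
  calc (2:ℕ) ^ (k - 1) = Fintype.card (Fin (k - 1) → Bool) := by simp
    _ = (Finset.univ.image F).card := by
        rw [Finset.card_image_of_injective _ hFinj, Finset.card_univ]
    _ = (↑(Finset.univ.image F) : Set (List Bool)).ncard := (Set.ncard_coe_finset _).symm
    _ ≤ S.ncard := Set.ncard_le_ncard hsub hfin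
end
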